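/- arXiv:1511.04769 — 11 statements merged into one kernel-verified Lean document; each statement's English description precedes it below -/
import Mathlib

section
/- Let r > 0, b > 0, s > 1 and 0 < μ₁ < μ₂ with f(N_c(μ₂), μ₂) < 0. Then f(N_c(μ₁), μ₁) < 0, so there exist positive numbers N₁^−, N₁^+, N₂^−, N₂^+ with f(N₁^±, μ₁) = f(N₂^±, μ₂) = 0, N₁^− < N_c(μ₁) < N₁^+ and N₂^− < N_c(μ₂) < N₂^+; moreover these roots satisfy N₁^− < N₂^− < N₂^+ < N₁^+. -/
/-!
For `N > 0` write `f(N, μ) = μ b + N^(s-1) (μ N - r)`. Then `f(0, μ) = μ b > 0`, `f` is positive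
once `μ N ≥ r`, and `f(N, μ)` is strictly increasing in `μ`. At the critical point
`μ N_c(μ) - r = -r/s`, so `f(N_c(μ), μ) = μ b - (r/s) N_c(μ)^(s-1)` is strictly increasing in `μ`
as well; hence negativity at `μ₂` passes to `μ₁`. The roots of `f(·, μ₂)` are points where
`f(·, μ₁) < 0`, and the intermediate value theorem places roots of `f(·, μ₁)` outside them.
-/

namespace CriticalRoots

variable {r b s μ μ₁ μ₂ N : ℝ}

noncomputable def F (r b s μ N : ℝ) : ℝ := μ * (b + N ^ s) - r * N ^ (s - 1)

noncomputable def critPoint (r s μ : ℝ) : ℝ := r * (s - 1) / (μ * s)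

theorem continuous_F (r b μ : ℝ) (hs : 1 ≤ s) : Continuous (F r b s μ) := by
  unfold F
  have hs0 : 0 ≤ s := by linarith
  have hs1 : 0 ≤ s - 1 := by linarith
  fun_prop (disch := assumption)

theorem F_zero (r b μ : ℝ) (hs : 1 < s) : F r b s μ 0 = μ * b := by
  simp [F, Real.zero_rpow (by linarith : s ≠ 0), Real.zero_rpow (by linarith : s - 1 ≠ 0)]

theorem F_eq_of_pos (r b s μ : ℝ) (hN : 0 < N) :
    F r b s μ N = μ * b + N ^ (s - 1) * (μ * N - r) := by
  have hNs : N ^ s = N ^ (s - 1) * N := by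
    rw [← Real.rpow_add_one hN.ne']
    norm_num
  rw [F, hNs]
  ring

theorem F_pos_of_le_mul (hb : 0 < b) (hμ : 0 < μ) (hN : 0 < N) (hrN : r ≤ μ * N) :
    0 < F r b s μ N := by
  rw [F_eq_of_pos r b s μ hN]
  have := Real.rpow_pos_of_pos hN (s - 1)
  nlinarith [mul_pos hμ hb]

theorem F_lt_F_of_lt (r : ℝ) (hb : 0 < b) (hN : 0 ≤ N) (h12 : μ₁ < μ₂) :
    F r b s μ₁ N < F r b s μ₂ N := by
  have : 0 < b + N ^ s := by positivity
  unfold F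
  nlinarith

theorem critPoint_pos (hr : 0 < r) (hs : 1 < s) (hμ : 0 < μ) : 0 < critPoint r s μ :=
  div_pos (mul_pos hr (by linarith)) (mul_pos hμ (by linarith))

theorem critPoint_lt_critPoint (hr : 0 < r) (hs : 1 < s) (hμ₁ : 0 < μ₁) (h12 : μ₁ < μ₂) :
    critPoint r s μ₂ < critPoint r s μ₁ :=
  div_lt_div_of_pos_left (mul_pos hr (by linarith)) (mul_pos hμ₁ (by linarith))
    (mul_lt_mul_of_pos_right h12 (by linarith))

theorem F_critPoint (b : ℝ) (hr : 0 < r) (hs : 1 < s) (hμ : 0 < μ) :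
    F r b s μ (critPoint r s μ) = μ * b - r / s * critPoint r s μ ^ (s - 1) := by
  have hμN : μ * critPoint r s μ - r = -(r / s) := by
    rw [critPoint]
    field_simp
    ring
  rw [F_eq_of_pos r b s μ (critPoint_pos hr hs hμ), hμN]
  ring

theorem F_critPoint_lt (hr : 0 < r) (hb : 0 < b) (hs : 1 < s) (hμ₁ : 0 < μ₁) (h12 : μ₁ < μ₂) :
    F r b s μ₁ (critPoint r s μ₁) < F r b s μ₂ (critPoint r s μ₂) := by
  have hμ₂ : 0 < μ₂ := hμ₁.trans h12
  have hpow : critPoint r s μ₂ ^ (s - 1) < critPoint r s μ₁ ^ (s - 1) :=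
    Real.rpow_lt_rpow (critPoint_pos hr hs hμ₂).le (critPoint_lt_critPoint hr hs hμ₁ h12)
      (by linarith)
  have hrs : 0 < r / s := div_pos hr (by linarith)
  rw [F_critPoint b hr hs hμ₁, F_critPoint b hr hs hμ₂]
  nlinarith [mul_lt_mul_of_pos_left hpow hrs]

theorem exists_root_mem_Ioo (hb : 0 < b) (hs : 1 < s) (hμ : 0 < μ) {a : ℝ} (ha : 0 < a)
    (hFa : F r b s μ a < 0) : ∃ x ∈ Set.Ioo 0 a, F r b s μ x = 0 := by
  have hF0 : 0 < F r b s μ 0 := by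
    rw [F_zero r b μ hs]
    exact mul_pos hμ hb
  exact intermediate_value_Ioo' ha.le (continuous_F r b μ hs.le).continuousOn ⟨hFa, hF0⟩

theorem exists_root_gt (hb : 0 < b) (hs : 1 < s) (hμ : 0 < μ) {a : ℝ} (ha : 0 < a)
    (hFa : F r b s μ a < 0) : ∃ x, a < x ∧ F r b s μ x = 0 := by
  obtain ⟨M, haM, hrM⟩ : ∃ M, a < M ∧ r ≤ μ * M := by
    refine ⟨max a (r / μ) + 1, by linarith [le_max_left a (r / μ)], ?_⟩
    have hmax : r ≤ μ * max a (r / μ) := (div_le_iff₀' hμ).mp (le_max_right _ _)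
    linarith
  have hFM := F_pos_of_le_mul (s := s) hb hμ (ha.trans haM) hrM
  obtain ⟨x, hx, hFx⟩ :=
    intermediate_value_Ioo haM.le (continuous_F r b μ hs.le).continuousOn ⟨hFa, hFM⟩
  exact ⟨x, hx.1, hFx⟩

end CriticalRoots

open CriticalRoots in
/-- For r, b > 0, s > 1 and 0 < μ₁ < μ₂ with f(N_c(μ₂), μ₂) < 0, one has
f(N_c(μ₁), μ₁) < 0 and there exist positive roots N₁⁻ < N_c(μ₁) < N₁⁺ of f(·, μ₁)
and N₂⁻ < N_c(μ₂) < N₂⁺ of f(·, μ₂) with N₁⁻ < N₂⁻ < N₂⁺ < N₁⁺. -/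
theorem stmt2 (r b s μ₁ μ₂ : ℝ) (hr : 0 < r) (hb : 0 < b) (hs : 1 < s)
    (hμ₁ : 0 < μ₁) (h12 : μ₁ < μ₂)
    (f : ℝ → ℝ → ℝ) (hf : ∀ N μ, f N μ = μ * (b + N ^ s) - r * N ^ (s - 1))
    (Nc : ℝ → ℝ) (hNc : ∀ μ, Nc μ = r * (s - 1) / (μ * s))
    (hneg : f (Nc μ₂) μ₂ < 0) :
    f (Nc μ₁) μ₁ < 0 ∧
    ∃ N1m N1p N2m N2p : ℝ,
      0 < N1m ∧ 0 < N2m ∧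
      f N1m μ₁ = 0 ∧ f N1p μ₁ = 0 ∧ f N2m μ₂ = 0 ∧ f N2p μ₂ = 0 ∧
      N1m < Nc μ₁ ∧ Nc μ₁ < N1p ∧ N2m < Nc μ₂ ∧ Nc μ₂ < N2p ∧
      N1m < N2m ∧ N2m < N2p ∧ N2p < N1p := by
  obtain rfl : f = fun N μ => F r b s μ N := funext₂ hf
  obtain rfl : Nc = critPoint r s := funext hNc
  have hμ₂ : 0 < μ₂ := hμ₁.trans h12
  have hNc₁ := critPoint_pos hr hs hμ₁
  have hNc₂ := critPoint_pos hr hs hμ₂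
  have hneg₁ := (F_critPoint_lt hr hb hs hμ₁ h12).trans hneg
  obtain ⟨N2m, ⟨hN2m, hN2mc⟩, hF2m⟩ := exists_root_mem_Ioo hb hs hμ₂ hNc₂ hneg
  obtain ⟨N2p, hcN2p, hF2p⟩ := exists_root_gt hb hs hμ₂ hNc₂ hneg
  have hF2m₁ : F r b s μ₁ N2m < 0 := hF2m ▸ F_lt_F_of_lt r hb hN2m.le h12
  have hF2p₁ : F r b s μ₁ N2p < 0 := hF2p ▸ F_lt_F_of_lt r hb (hNc₂.trans hcN2p).le h12
  obtain ⟨N1m, ⟨hN1m, hN1m2m⟩, hF1m⟩ := exists_root_mem_Ioo hb hs hμ₁ hN2m hF2m₁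
  have hFmax : F r b s μ₁ (max N2p (critPoint r s μ₁)) < 0 := by
    rcases max_choice N2p (critPoint r s μ₁) with h | h <;> rw [h] <;> assumption
  obtain ⟨N1p, hmaxN1p, hF1p⟩ :=
    exists_root_gt hb hs hμ₁ (hNc₁.trans_le (le_max_right _ _)) hFmax
  have hcNc := critPoint_lt_critPoint hr hs hμ₁ h12
  exact ⟨hneg₁, N1m, N1p, N2m, N2p, hN1m, hN2m, hF1m, hF1p, hF2m, hF2p, by linarith,
    (le_max_right _ _).trans_lt hmaxN1p, hN2mc, hcN2p, hN1m2m, hN2mc.trans hcN2p,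
    (le_max_left _ _).trans_lt hmaxN1p⟩
end

section
/- Let μ₁ > 0, μ₂ > 0 and rd > 0. Then the equation (1 − x)² = (μ₁·rd/μ₂)·x² + (x(1 − x)/μ₂)·((1 + rd)x − 1) has exactly one solution x₁* in the open interval (0, 1). -/
/-!
The substitution `t = (1 - x) / x` maps `(0, 1)` bijectively onto `(0, ∞)` and, after clearing
the factor `x³ / μ₂`, turns the equation into `p(t) = 0` for the cubic
`p(t) = μ₂ t³ + (μ₂ + 1) t² - rd (1 + μ₁) t - μ₁ rd`.
Its coefficient signs change exactly once, and it has exactly one positive root: it is negative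
at `0`, positive for large `t`, and `p(t) / t²` is strictly increasing on `(0, ∞)`.
-/

open Set

section Cubic

variable {a b c d : ℝ}

theorem cubic_div_sq_strictMonoOn (ha : 0 < a) (hc : 0 ≤ c) (hd : 0 ≤ d) :
    StrictMonoOn (fun t => (a * t ^ 3 + b * t ^ 2 - c * t - d) / t ^ 2) (Ioi 0) := by
  intro s (hs : 0 < s) t (ht : 0 < t) hst
  have hfactor :
      (a * t ^ 3 + b * t ^ 2 - c * t - d) * s ^ 2 - (a * s ^ 3 + b * s ^ 2 - c * s - d) * t ^ 2
        = (t - s) * (a * s ^ 2 * t ^ 2 + c * s * t + d * (s + t)) := by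
    ring
  have hpos : 0 < (t - s) * (a * s ^ 2 * t ^ 2 + c * s * t + d * (s + t)) := by
    have : 0 < t - s := sub_pos.mpr hst
    positivity
  show _ / _ < _ / _
  rw [div_lt_div_iff₀ (by positivity) (by positivity)]
  linarith

theorem exists_pos_cubic_root (ha : 0 < a) (hc : 0 ≤ c) (hd : 0 < d) :
    ∃ t, 0 < t ∧ a * t ^ 3 + b * t ^ 2 - c * t - d = 0 := by
  set p : ℝ → ℝ := fun t => a * t ^ 3 + b * t ^ 2 - c * t - d
  set T := (a + |b| + c + d) / a
  have haT : a * T = a + |b| + c + d := mul_div_cancel₀ _ ha.ne'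
  have hT : 1 ≤ T := by
    by_contra! h
    nlinarith [abs_nonneg b]
  -- for `T ≥ 1`: `p T ≥ T² (a T + b - c - d) = T² (a + |b| + b)`
  have hpT : 0 < p T := by
    nlinarith [neg_abs_le b,
      mul_nonneg hc (mul_nonneg (by linarith : (0 : ℝ) ≤ T) (sub_nonneg.2 hT)),
      mul_nonneg hd.le (by nlinarith : (0 : ℝ) ≤ T ^ 2 - 1),
      mul_pos ha (by positivity : (0 : ℝ) < T ^ 2)]
  have hp0 : p 0 < 0 := by simp [p, hd]
  have hcont : ContinuousOn p (Icc 0 T) := by fun_prop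
  obtain ⟨t, ht, hpt⟩ := intermediate_value_Ioo (by linarith) hcont ⟨hp0, hpT⟩
  exact ⟨t, ht.1, hpt⟩

theorem existsUnique_pos_cubic_root (ha : 0 < a) (hc : 0 ≤ c) (hd : 0 < d) :
    ∃! t, 0 < t ∧ a * t ^ 3 + b * t ^ 2 - c * t - d = 0 := by
  obtain ⟨t, ht, hpt⟩ := exists_pos_cubic_root (b := b) ha hc hd
  refine ⟨t, ⟨ht, hpt⟩, fun s ⟨hs, hps⟩ => ?_⟩
  refine (cubic_div_sq_strictMonoOn (b := b) ha hc hd.le).injOn (mem_Ioi.2 hs) (mem_Ioi.2 ht) ?_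
  simp only [hps, hpt, zero_div]

end Cubic

section Allocation

variable {μ₁ μ₂ rd x : ℝ}

def allocationCubic (μ₁ μ₂ rd t : ℝ) : ℝ :=
  μ₂ * t ^ 3 + (μ₂ + 1) * t ^ 2 - rd * (1 + μ₁) * t - μ₁ * rd

theorem allocationCubic_mul_cube (hμ₂ : μ₂ ≠ 0) (hx : x ≠ 0) :
    allocationCubic μ₁ μ₂ rd ((1 - x) / x) * x ^ 3
      = μ₂ * ((1 - x) ^ 2
          - ((μ₁ * rd / μ₂) * x ^ 2 + (x * (1 - x) / μ₂) * ((1 + rd) * x - 1))) := by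
  unfold allocationCubic
  field_simp
  ring

theorem allocation_eq_iff_allocationCubic_eq_zero (hμ₂ : μ₂ ≠ 0) (hx : x ≠ 0) :
    (1 - x) ^ 2 = (μ₁ * rd / μ₂) * x ^ 2 + (x * (1 - x) / μ₂) * ((1 + rd) * x - 1) ↔
      allocationCubic μ₁ μ₂ rd ((1 - x) / x) = 0 := by
  rw [← sub_eq_zero, ← (mul_right_injective₀ hμ₂).eq_iff, mul_zero,
    ← allocationCubic_mul_cube hμ₂ hx, mul_eq_zero, or_iff_left (pow_ne_zero 3 hx)]

end Allocation

/-- For μ₁, μ₂, rd > 0, the equation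
(1 − x)² = (μ₁·rd/μ₂)x² + (x(1 − x)/μ₂)((1 + rd)x − 1)
has exactly one solution in (0, 1). -/
theorem stmt6 (μ₁ μ₂ rd : ℝ) (hμ₁ : 0 < μ₁) (hμ₂ : 0 < μ₂) (hrd : 0 < rd) :
    ∃! x : ℝ, x ∈ Set.Ioo (0 : ℝ) 1 ∧
      (1 - x) ^ 2 =
        (μ₁ * rd / μ₂) * x ^ 2 + (x * (1 - x) / μ₂) * ((1 + rd) * x - 1) := by
  obtain ⟨t, ⟨ht, hroot⟩, huniq⟩ := existsUnique_pos_cubic_root (b := μ₂ + 1)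
    (c := rd * (1 + μ₁)) (d := μ₁ * rd) hμ₂ (by positivity) (by positivity)
  have hx : 1 / (1 + t) ∈ Ioo (0 : ℝ) 1 :=
    ⟨by positivity, (div_lt_one (by positivity)).2 (by linarith)⟩
  have hxt : (1 - 1 / (1 + t)) / (1 / (1 + t)) = t := by field_simp; ring
  refine ⟨1 / (1 + t), ⟨hx, ?_⟩, fun y ⟨hy, hEy⟩ => ?_⟩
  · rwa [allocation_eq_iff_allocationCubic_eq_zero hμ₂.ne' hx.1.ne', hxt]
  · have hyt : (1 - y) / y = t := huniq _
      ⟨div_pos (sub_pos.2 hy.2) hy.1,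
        (allocation_eq_iff_allocationCubic_eq_zero hμ₂.ne' hy.1.ne').1 hEy⟩
    have hy' : 1 + (1 - y) / y = 1 / y := by rw [one_add_div hy.1.ne', add_sub_cancel]
    rw [← hyt, hy', one_div_one_div]
end

section
/- Let μ₁ > 0, μ₂ > 0 and rd > 0, and let x₁* be the unique solution in (0, 1) of (1 − x)² = (μ₁·rd/μ₂)·x² + (x(1 − x)/μ₂)·((1 + rd)x − 1). Define x̂₁ = (rd(1 + μ₁) + 2 − √(rd²(1 + μ₁)² + 4·μ₁·rd))/(2(1 + rd)). Then 0 < x̂₁ < 1/(1 + rd) and x₁* > x̂₁. -/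
/-!
Put `b = rd(1 + μ₁) + 2`. Then `b² - 4(1 + rd) = rd²(1 + μ₁)² + 4μ₁rd`, so `x̂₁` is the smaller root
of `Q(y) = (1 + rd)y² - by + 1`. Since `Q(0) = 1 > 0` and `Q(1/(1 + rd)) = -μ₁rd/(1 + rd) < 0`, that
root lies in `(0, 1/(1 + rd))`. Multiplying out the equilibrium equation gives
`μ₂(1 - x)² = -x Q(x)`, so `Q(x₁*) < 0` and `x₁*` lies strictly above the smaller root.
-/

open Real

/-- The smaller root of `a y² - b y + c` for `a > 0`. -/
noncomputable def smallerRoot (a b c : ℝ) : ℝ :=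
  (b - √(b ^ 2 - 4 * a * c)) / (2 * a)

theorem smallerRoot_pos {a b c : ℝ} (ha : 0 < a) (hb : 0 < b) (hc : 0 < c) :
    0 < smallerRoot a b c := by
  have hsqrt : √(b ^ 2 - 4 * a * c) < b := by
    rw [Real.sqrt_lt' hb]
    nlinarith
  exact div_pos (by linarith) (by positivity)

theorem smallerRoot_lt_of_neg {a b c y : ℝ} (ha : 0 < a) (hy : a * y ^ 2 - b * y + c < 0) :
    smallerRoot a b c < y := by
  have hsq : (2 * a * y - b) ^ 2 < √(b ^ 2 - 4 * a * c) ^ 2 := by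
    rw [Real.sq_sqrt (by nlinarith [sq_nonneg (2 * a * y - b)])]
    nlinarith
  have hlow := (abs_lt_of_sq_lt_sq' hsq (Real.sqrt_nonneg _)).1
  rw [smallerRoot, div_lt_iff₀ (by positivity)]
  linarith

theorem allocationQuadratic_neg_of_equilibrium {μ₁ μ₂ rd x : ℝ} (hμ₂ : 0 < μ₂)
    (hx : x ∈ Set.Ioo (0 : ℝ) 1)
    (heq : (1 - x) ^ 2 =
      (μ₁ * rd / μ₂) * x ^ 2 + (x * (1 - x) / μ₂) * ((1 + rd) * x - 1)) :
    (1 + rd) * x ^ 2 - (rd * (1 + μ₁) + 2) * x + 1 < 0 := by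
  obtain ⟨hx0, hx1⟩ := hx
  have hfactor : x * ((1 + rd) * x ^ 2 - (rd * (1 + μ₁) + 2) * x + 1) = -(μ₂ * (1 - x) ^ 2) := by
    field_simp at heq
    linear_combination heq
  have hneg : x * ((1 + rd) * x ^ 2 - (rd * (1 + μ₁) + 2) * x + 1) < 0 := by
    rw [hfactor, neg_lt_zero]
    have : 0 < 1 - x := by linarith
    positivity
  exact neg_of_mul_neg_right hneg hx0.le

/-- For μ₁, μ₂, rd > 0 and x₁* the solution in (0, 1) of
(1 − x)² = (μ₁·rd/μ₂)x² + (x(1 − x)/μ₂)((1 + rd)x − 1), the quantity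
xhat = (rd(1 + μ₁) + 2 − √(rd²(1 + μ₁)² + 4μ₁rd))/(2(1 + rd)) satisfies
0 < xhat < 1/(1 + rd) and x₁* > xhat. -/
theorem stmt7 (μ₁ μ₂ rd x : ℝ) (hμ₁ : 0 < μ₁) (hμ₂ : 0 < μ₂) (hrd : 0 < rd)
    (hx : x ∈ Set.Ioo (0 : ℝ) 1)
    (heq : (1 - x) ^ 2 =
      (μ₁ * rd / μ₂) * x ^ 2 + (x * (1 - x) / μ₂) * ((1 + rd) * x - 1)) :
    let xhat : ℝ :=
      (rd * (1 + μ₁) + 2 - Real.sqrt (rd ^ 2 * (1 + μ₁) ^ 2 + 4 * μ₁ * rd)) /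
        (2 * (1 + rd))
    0 < xhat ∧ xhat < 1 / (1 + rd) ∧ xhat < x := by
  intro xhat
  have h1rd : 0 < 1 + rd := by linarith
  have hxhat : xhat = smallerRoot (1 + rd) (rd * (1 + μ₁) + 2) 1 := by
    simp only [xhat, smallerRoot]
    ring_nf
  have hQ_inv : (1 + rd) * (1 / (1 + rd)) ^ 2 - (rd * (1 + μ₁) + 2) * (1 / (1 + rd)) + 1
      = -(μ₁ * rd / (1 + rd)) := by
    field_simp
    ring
  rw [hxhat]
  refine ⟨smallerRoot_pos h1rd (by positivity) one_pos, smallerRoot_lt_of_neg h1rd ?_,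
    smallerRoot_lt_of_neg h1rd (allocationQuadratic_neg_of_equilibrium hμ₂ hx heq)⟩
  rw [hQ_inv, neg_lt_zero]
  positivity
end

section
/- Let μ₁ > 0, μ₂ > 0 and rd > 0, and define f₂(x) = (μ₁·rd/μ₂)·x² + (x(1 − x)/μ₂)·((1 + rd)x − 1). Then f₂(x) = −((1 + rd)x/μ₂)·(x² − b₁x + b₀) with b₁ = 1 + (1 + rd·μ₁)/(1 + rd) and b₀ = 1/(1 + rd); moreover b₁² > 4b₀ > 0, the quadratic x² − b₁x + b₀ has roots x̂₁ = (b₁ − √(b₁² − 4b₀))/2 ∈ (0, 1) and x̂₂ = (b₁ + √(b₁² − 4b₀))/2 > 1, and f₂(x) < 0 for 0 < x < x̂₁ while f₂(x) > 0 for x̂₁ < x < 1. -/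
/-!
The quadratic `q(x) = x² − b₁x + b₀` has `q(0) = b₀ > 0` and `q(1) = −rd·μ₁/(1 + rd) < 0`,
so its discriminant is positive and its two real roots straddle `1`, the smaller one
lying in `(0, 1)`. Since `f₂(x) = −((1 + rd)x/μ₂)·q(x)` with a negative prefactor for
`x > 0`, the sign of `f₂` on `(0, 1)` is the opposite of that of `q`.
-/

namespace MonicQuadratic

/-- With `highRoot`, the roots of `x² − b x + c` whenever `4 c ≤ b²`. -/
noncomputable def lowRoot (b c : ℝ) : ℝ := (b - √(b ^ 2 - 4 * c)) / 2

noncomputable def highRoot (b c : ℝ) : ℝ := (b + √(b ^ 2 - 4 * c)) / 2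

variable {b c : ℝ}

theorem four_mul_lt_sq_of_neg {t : ℝ} (ht : t ^ 2 - b * t + c < 0) : 4 * c < b ^ 2 := by
  nlinarith [sq_nonneg (2 * t - b)]

theorem eq_mul_sub_roots (hD : 4 * c ≤ b ^ 2) (x : ℝ) :
    x ^ 2 - b * x + c = (x - lowRoot b c) * (x - highRoot b c) := by
  have hs : √(b ^ 2 - 4 * c) ^ 2 = b ^ 2 - 4 * c := Real.sq_sqrt (by linarith)
  unfold lowRoot highRoot
  linear_combination hs / 4

theorem lowRoot_isRoot (hD : 4 * c ≤ b ^ 2) :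
    lowRoot b c ^ 2 - b * lowRoot b c + c = 0 := by
  rw [eq_mul_sub_roots hD, sub_self, zero_mul]

theorem highRoot_isRoot (hD : 4 * c ≤ b ^ 2) :
    highRoot b c ^ 2 - b * highRoot b c + c = 0 := by
  rw [eq_mul_sub_roots hD, sub_self, mul_zero]

theorem lowRoot_le_highRoot : lowRoot b c ≤ highRoot b c := by
  unfold lowRoot highRoot
  linarith [Real.sqrt_nonneg (b ^ 2 - 4 * c)]

theorem lowRoot_pos (hb : 0 < b) (hc : 0 < c) : 0 < lowRoot b c := by
  have : √(b ^ 2 - 4 * c) < b := (Real.sqrt_lt' hb).2 (by linarith)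
  unfold lowRoot
  linarith

theorem lowRoot_lt_and_lt_highRoot_of_neg {t : ℝ} (ht : t ^ 2 - b * t + c < 0) :
    lowRoot b c < t ∧ t < highRoot b c := by
  rw [eq_mul_sub_roots (four_mul_lt_sq_of_neg ht).le] at ht
  rcases mul_neg_iff.1 ht with ⟨hlow, hhigh⟩ | ⟨hlow, hhigh⟩
  · exact ⟨by linarith, by linarith⟩
  · linarith [lowRoot_le_highRoot (b := b) (c := c)]

theorem pos_of_lt_lowRoot (hD : 4 * c ≤ b ^ 2) {x : ℝ} (hx : x < lowRoot b c) :
    0 < x ^ 2 - b * x + c := by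
  rw [eq_mul_sub_roots hD]
  exact mul_pos_of_neg_of_neg (by linarith) (by linarith [lowRoot_le_highRoot (b := b) (c := c)])

theorem neg_of_lowRoot_lt_of_lt_highRoot (hD : 4 * c ≤ b ^ 2) {x : ℝ}
    (hlow : lowRoot b c < x) (hhigh : x < highRoot b c) : x ^ 2 - b * x + c < 0 := by
  rw [eq_mul_sub_roots hD]
  exact mul_neg_of_pos_of_neg (by linarith) (by linarith)

end MonicQuadratic

open MonicQuadratic

theorem allocation_rhs_eq_mul_quadratic (μ₁ μ₂ : ℝ) {rd : ℝ} (hrd : 1 + rd ≠ 0) (x : ℝ) :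
    (μ₁ * rd / μ₂) * x ^ 2 + (x * (1 - x) / μ₂) * ((1 + rd) * x - 1) =
      -((1 + rd) * x / μ₂) *
        (x ^ 2 - (1 + (1 + rd * μ₁) / (1 + rd)) * x + 1 / (1 + rd)) := by
  field_simp
  ring

theorem allocation_quadratic_one_neg {μ₁ rd : ℝ} (hμ₁ : 0 < μ₁) (hrd : 0 < rd) :
    (1 : ℝ) ^ 2 - (1 + (1 + rd * μ₁) / (1 + rd)) * 1 + 1 / (1 + rd) < 0 := by
  have hvalue : (1 : ℝ) ^ 2 - (1 + (1 + rd * μ₁) / (1 + rd)) * 1 + 1 / (1 + rd) =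
      -(rd * μ₁ / (1 + rd)) := by
    field_simp
    ring
  rw [hvalue, neg_neg_iff_pos]
  positivity

/-- For μ₁, μ₂, rd > 0, f₂(x) = (μ₁·rd/μ₂)x² + (x(1 − x)/μ₂)((1 + rd)x − 1)
factors as −((1 + rd)x/μ₂)(x² − b₁x + b₀) with b₁ = 1 + (1 + rd·μ₁)/(1 + rd) and
b₀ = 1/(1 + rd); moreover b₁² > 4b₀ > 0, the quadratic has roots
xhat₁ = (b₁ − √(b₁² − 4b₀))/2 ∈ (0, 1) and xhat₂ = (b₁ + √(b₁² − 4b₀))/2 > 1,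
and f₂ < 0 on (0, xhat₁) while f₂ > 0 on (xhat₁, 1). -/
theorem stmt8 (μ₁ μ₂ rd : ℝ) (hμ₁ : 0 < μ₁) (hμ₂ : 0 < μ₂) (hrd : 0 < rd) :
    let f₂ : ℝ → ℝ :=
      fun x => (μ₁ * rd / μ₂) * x ^ 2 + (x * (1 - x) / μ₂) * ((1 + rd) * x - 1)
    let b₁ : ℝ := 1 + (1 + rd * μ₁) / (1 + rd)
    let b₀ : ℝ := 1 / (1 + rd)
    let xhat₁ : ℝ := (b₁ - Real.sqrt (b₁ ^ 2 - 4 * b₀)) / 2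
    let xhat₂ : ℝ := (b₁ + Real.sqrt (b₁ ^ 2 - 4 * b₀)) / 2
    (∀ x : ℝ, f₂ x = -((1 + rd) * x / μ₂) * (x ^ 2 - b₁ * x + b₀)) ∧
    b₁ ^ 2 > 4 * b₀ ∧ 0 < b₀ ∧
    xhat₁ ∈ Set.Ioo (0 : ℝ) 1 ∧ 1 < xhat₂ ∧
    xhat₁ ^ 2 - b₁ * xhat₁ + b₀ = 0 ∧ xhat₂ ^ 2 - b₁ * xhat₂ + b₀ = 0 ∧
    (∀ x : ℝ, 0 < x → x < xhat₁ → f₂ x < 0) ∧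
    (∀ x : ℝ, xhat₁ < x → x < 1 → 0 < f₂ x) := by
  intro f₂ b₁ b₀ xhat₁ xhat₂
  have hfactor : ∀ x, f₂ x = -((1 + rd) * x / μ₂) * (x ^ 2 - b₁ * x + b₀) :=
    allocation_rhs_eq_mul_quadratic μ₁ μ₂ (by positivity)
  have hq₁ : (1 : ℝ) ^ 2 - b₁ * 1 + b₀ < 0 := allocation_quadratic_one_neg hμ₁ hrd
  have hD : 4 * b₀ < b₁ ^ 2 := four_mul_lt_sq_of_neg hq₁
  have hb₀ : 0 < b₀ := by positivity
  obtain ⟨hxhat₁, hxhat₂⟩ := lowRoot_lt_and_lt_highRoot_of_neg hq₁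
  have hprefactor : ∀ x : ℝ, 0 < x → -((1 + rd) * x / μ₂) < 0 := fun x hx => by
    rw [neg_neg_iff_pos]
    positivity
  refine ⟨hfactor, hD, hb₀, ⟨lowRoot_pos (by positivity) hb₀, hxhat₁⟩, hxhat₂,
    lowRoot_isRoot hD.le, highRoot_isRoot hD.le, fun x hx₀ hx => ?_, fun x hx hx₁ => ?_⟩
  · rw [hfactor]
    exact mul_neg_of_neg_of_pos (hprefactor x hx₀) (pos_of_lt_lowRoot hD.le hx)
  · rw [hfactor]
    have hx₀ : 0 < x := (lowRoot_pos (by positivity) hb₀).trans hx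
    exact mul_pos_of_neg_of_neg (hprefactor x hx₀)
      (neg_of_lowRoot_lt_of_lt_highRoot hD.le hx (hx₁.trans hxhat₂))
end

section
/- For μ₁ > 0, μ₂ > 0 and rd > 0, let x₁*(μ₁, μ₂, rd) denote the unique solution in (0, 1) of (1 − x)² = (μ₁·rd/μ₂)·x² + (x(1 − x)/μ₂)·((1 + rd)x − 1). Then: (i) for fixed μ₂ and rd, x₁* is strictly decreasing in μ₁, i.e. if μ₁ < μ₁′ then x₁*(μ₁′, μ₂, rd) < x₁*(μ₁, μ₂, rd); (ii) for fixed μ₁ and rd, x₁* is strictly increasing in μ₂; (iii) for fixed μ₁ and μ₂, x₁* is strictly decreasing in rd. -/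
/-!
Clearing denominators, `E(x)` reads `(μ₂ + x)(1 - x)² = rd · x² (μ₁ + 1 - x)`, so on `(0, 1)` the
root is where `ρ(x) = (μ₂ + x)(1 - x)² / (x² (μ₁ + 1 - x))` takes the value `rd`. The function `ρ`
is strictly decreasing in `x`, strictly decreasing in `μ₁`, strictly increasing in `μ₂` and does
not involve `rd`; each of the three comparisons follows by evaluating `ρ` at the other root.
-/

/-- The equilibrium equation E(x) for the inside-colony task allocation of the
two-task model with social interactions, with parameters μ₁, μ₂, rd. -/
def taskEq (μ₁ μ₂ rd x : ℝ) : Prop :=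
  (1 - x) ^ 2 = (μ₁ * rd / μ₂) * x ^ 2 + (x * (1 - x) / μ₂) * ((1 + rd) * x - 1)

open Set

noncomputable def demandRatio (μ₁ μ₂ x : ℝ) : ℝ :=
  (μ₂ + x) * (1 - x) ^ 2 / (x ^ 2 * (μ₁ + 1 - x))

section

variable {μ₁ μ₂ rd x : ℝ}

lemma taskEq_iff_mul_eq (hμ₂ : μ₂ ≠ 0) :
    taskEq μ₁ μ₂ rd x ↔ (μ₂ + x) * (1 - x) ^ 2 = rd * (x ^ 2 * (μ₁ + 1 - x)) := by
  unfold taskEq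
  field_simp
  constructor <;> intro h <;> linear_combination h

lemma demandRatio_denom_pos (hμ₁ : 0 ≤ μ₁) (hx : x ∈ Ioo (0 : ℝ) 1) :
    0 < x ^ 2 * (μ₁ + 1 - x) := by
  have : 0 < μ₁ + 1 - x := by linarith [hx.2]
  have : 0 < x := hx.1
  positivity

lemma taskEq_iff_demandRatio_eq (hμ₁ : 0 ≤ μ₁) (hμ₂ : μ₂ ≠ 0) (hx : x ∈ Ioo (0 : ℝ) 1) :
    taskEq μ₁ μ₂ rd x ↔ demandRatio μ₁ μ₂ x = rd := by
  rw [taskEq_iff_mul_eq hμ₂, demandRatio, div_eq_iff (demandRatio_denom_pos hμ₁ hx).ne']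

lemma strictAntiOn_demandRatio (hμ₁ : 0 ≤ μ₁) (hμ₂ : 0 ≤ μ₂) :
    StrictAntiOn (demandRatio μ₁ μ₂) (Ioo 0 1) := by
  rintro a ⟨ha0, ha1⟩ b ⟨hb0, hb1⟩ hab
  have hsplit : ∀ y, demandRatio μ₁ μ₂ y =
      (μ₂ + y) * (1 - y) / y ^ 2 * ((1 - y) / (μ₁ + 1 - y)) := by
    intro y
    rw [demandRatio, div_mul_div_comm]
    ring
  have hfirst : (μ₂ + b) * (1 - b) / b ^ 2 < (μ₂ + a) * (1 - a) / a ^ 2 := by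
    rw [div_lt_div_iff₀ (by positivity) (by positivity)]
    nlinarith [mul_nonneg (mul_nonneg hμ₂ (sub_nonneg.2 hab.le))
        (by nlinarith : (0 : ℝ) ≤ a + b - a * b),
      mul_pos (mul_pos ha0 hb0) (sub_pos.2 hab)]
  have hsecond : (1 - b) / (μ₁ + 1 - b) ≤ (1 - a) / (μ₁ + 1 - a) := by
    rw [div_le_div_iff₀ (by linarith) (by linarith)]
    nlinarith [mul_nonneg hμ₁ (sub_nonneg.2 hab.le)]
  have h1a : 0 < 1 - a := by linarith
  rw [hsplit, hsplit]
  exact mul_lt_mul hfirst hsecond (div_pos (by linarith) (by linarith)) (by positivity)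

lemma strictAntiOn_demandRatio_left (hμ₂ : 0 ≤ μ₂) (hx : x ∈ Ioo (0 : ℝ) 1) :
    StrictAntiOn (fun μ₁ ↦ demandRatio μ₁ μ₂ x) (Ici 0) := by
  intro a ha b _ hab
  have : 0 < x := hx.1
  have : 0 < 1 - x := by linarith [hx.2]
  exact div_lt_div_of_pos_left (by positivity) (demandRatio_denom_pos ha hx) (by gcongr)

lemma strictMono_demandRatio_right (hμ₁ : 0 ≤ μ₁) (hx : x ∈ Ioo (0 : ℝ) 1) :
    StrictMono (fun μ₂ ↦ demandRatio μ₁ μ₂ x) := by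
  intro a b hab
  have : 0 < 1 - x := by linarith [hx.2]
  exact div_lt_div_of_pos_right (by gcongr) (demandRatio_denom_pos hμ₁ hx)

end

theorem stmt9_general (μ₁ μ₂ rd : ℝ) (hμ₁ : 0 < μ₁) (hμ₂ : 0 < μ₂) :
    (∀ μ₁' x x' : ℝ, μ₁ < μ₁' →
      x ∈ Set.Ioo (0 : ℝ) 1 → taskEq μ₁ μ₂ rd x →
      x' ∈ Set.Ioo (0 : ℝ) 1 → taskEq μ₁' μ₂ rd x' → x' < x) ∧
    (∀ μ₂' x x' : ℝ, μ₂ < μ₂' →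
      x ∈ Set.Ioo (0 : ℝ) 1 → taskEq μ₁ μ₂ rd x →
      x' ∈ Set.Ioo (0 : ℝ) 1 → taskEq μ₁ μ₂' rd x' → x < x') ∧
    (∀ rd' x x' : ℝ, rd < rd' →
      x ∈ Set.Ioo (0 : ℝ) 1 → taskEq μ₁ μ₂ rd x →
      x' ∈ Set.Ioo (0 : ℝ) 1 → taskEq μ₁ μ₂ rd' x' → x' < x) := by
  refine ⟨fun μ₁' x x' hlt hx hE hx' hE' ↦ ?_, fun μ₂' x x' hlt hx hE hx' hE' ↦ ?_,
    fun rd' x x' hlt hx hE hx' hE' ↦ ?_⟩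
  · have hμ₁' : 0 ≤ μ₁' := by linarith
    rw [taskEq_iff_demandRatio_eq hμ₁.le hμ₂.ne' hx] at hE
    rw [taskEq_iff_demandRatio_eq hμ₁' hμ₂.ne' hx'] at hE'
    refine (strictAntiOn_demandRatio hμ₁' hμ₂.le).lt_iff_gt hx hx' |>.1 ?_
    calc demandRatio μ₁' μ₂ x < demandRatio μ₁ μ₂ x :=
          strictAntiOn_demandRatio_left hμ₂.le hx hμ₁.le hμ₁' hlt
      _ = demandRatio μ₁' μ₂ x' := hE.trans hE'.symm
  · have hμ₂' : 0 < μ₂' := by linarith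
    rw [taskEq_iff_demandRatio_eq hμ₁.le hμ₂.ne' hx] at hE
    rw [taskEq_iff_demandRatio_eq hμ₁.le hμ₂'.ne' hx'] at hE'
    refine (strictAntiOn_demandRatio hμ₁.le hμ₂'.le).lt_iff_gt hx' hx |>.1 ?_
    calc demandRatio μ₁ μ₂' x' = demandRatio μ₁ μ₂ x := hE'.trans hE.symm
      _ < demandRatio μ₁ μ₂' x := strictMono_demandRatio_right hμ₁.le hx hlt
  · rw [taskEq_iff_demandRatio_eq hμ₁.le hμ₂.ne' hx] at hE
    rw [taskEq_iff_demandRatio_eq hμ₁.le hμ₂.ne' hx'] at hE'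
    exact (strictAntiOn_demandRatio hμ₁.le hμ₂.le).lt_iff_gt hx hx' |>.1 (hE ▸ hE' ▸ hlt)

/-- The unique root x₁* ∈ (0, 1) of the equilibrium equation is (i) strictly
decreasing in μ₁, (ii) strictly increasing in μ₂, (iii) strictly decreasing
in rd. -/
theorem stmt9 (μ₁ μ₂ rd : ℝ) (hμ₁ : 0 < μ₁) (hμ₂ : 0 < μ₂) (hrd : 0 < rd) :
    (∀ μ₁' x x' : ℝ, μ₁ < μ₁' →
      x ∈ Set.Ioo (0 : ℝ) 1 → taskEq μ₁ μ₂ rd x →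
      x' ∈ Set.Ioo (0 : ℝ) 1 → taskEq μ₁' μ₂ rd x' → x' < x) ∧
    (∀ μ₂' x x' : ℝ, μ₂ < μ₂' →
      x ∈ Set.Ioo (0 : ℝ) 1 → taskEq μ₁ μ₂ rd x →
      x' ∈ Set.Ioo (0 : ℝ) 1 → taskEq μ₁ μ₂' rd x' → x < x') ∧
    (∀ rd' x x' : ℝ, rd < rd' →
      x ∈ Set.Ioo (0 : ℝ) 1 → taskEq μ₁ μ₂ rd x →
      x' ∈ Set.Ioo (0 : ℝ) 1 → taskEq μ₁ μ₂ rd' x' → x' < x) :=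
  stmt9_general μ₁ μ₂ rd hμ₁ hμ₂
end

section
/- Let μ₁ > 0, μ₂ > 0 and rd > 0, let x₁^R be the unique root in (0, 1) of (1 − x)² = (μ₁·rd/μ₂)·x² + (x(1 − x)/μ₂)·((1 + rd)x − 1), and set x₁^{NS} = 1/(1 + √(μ₁·rd/μ₂)) and x₁^{SI} = 1/(1 + rd). Then: (i) if μ₁/μ₂ > rd, then x₁^{NS} < x₁^R < x₁^{SI}; (ii) if μ₁/μ₂ < rd, then x₁^{SI} < x₁^R < x₁^{NS}. -/
/-! With `s = √(μ₁·rd/μ₂)` the difference of squares `(1 - x)² - s²x²` factors, so the root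
equation reads `(1 - x + s x)·(1 - (1 + s)x) = (x(1 - x)/μ₂)·((1 + rd)x - 1)`. Both weights are
positive on `(0, 1)`, hence `1 - x/x₁^NS` and `x/x₁^SI - 1` have the same sign; their sum is
`(rd - s)x`, whose sign is that of `rd - μ₁/μ₂`. This pins `x₁^R` strictly between `x₁^NS` and
`x₁^SI`, on the side dictated by the comparison of `μ₁/μ₂` with `rd`. -/

lemma neg_and_neg_of_mul_eq_mul_of_add_neg {α : Type*} [Ring α] [LinearOrder α]
    [IsStrictOrderedRing α] {a b c d : α} (hc : 0 < c) (hd : 0 < d) (h : c * a = d * b)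
    (hab : a + b < 0) : a < 0 ∧ b < 0 := by
  have ha : a < 0 := by
    by_contra! ha
    have hb : b < 0 := (le_add_of_nonneg_left ha).trans_lt hab
    exact (mul_neg_of_pos_of_neg hd hb).not_ge (h ▸ mul_nonneg hc.le ha)
  exact ⟨ha, neg_of_mul_neg_right (h ▸ mul_neg_of_pos_of_neg hc ha) hd.le⟩

lemma one_div_lt_and_lt_one_div_of_mul_eq_mul {c d r s x : ℝ} (hc : 0 < c) (hd : 0 < d)
    (hx : 0 < x) (hr : 0 < 1 + r) (hrs : r < s)
    (h : c * (1 - (1 + s) * x) = d * ((1 + r) * x - 1)) :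
    1 / (1 + s) < x ∧ x < 1 / (1 + r) := by
  obtain ⟨hlow, hhigh⟩ := neg_and_neg_of_mul_eq_mul_of_add_neg hc hd h (by nlinarith)
  constructor
  · rw [div_lt_iff₀ (by linarith)]; linarith
  · rw [lt_div_iff₀ hr]; linarith

/-- For μ₁, μ₂, rd > 0 with x₁^R the unique root in (0, 1) of
(1 − x)² = (μ₁·rd/μ₂)x² + (x(1 − x)/μ₂)((1 + rd)x − 1),
x₁^NS = 1/(1 + √(μ₁·rd/μ₂)) and x₁^SI = 1/(1 + rd):
(i) if μ₁/μ₂ > rd then x₁^NS < x₁^R < x₁^SI;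
(ii) if μ₁/μ₂ < rd then x₁^SI < x₁^R < x₁^NS. -/
theorem stmt11 (μ₁ μ₂ rd xR : ℝ) (hμ₁ : 0 < μ₁) (hμ₂ : 0 < μ₂) (hrd : 0 < rd)
    (hxR : xR ∈ Set.Ioo (0 : ℝ) 1)
    (heq : (1 - xR) ^ 2 =
      (μ₁ * rd / μ₂) * xR ^ 2 + (xR * (1 - xR) / μ₂) * ((1 + rd) * xR - 1)) :
    let xNS : ℝ := 1 / (1 + Real.sqrt (μ₁ * rd / μ₂))
    let xSI : ℝ := 1 / (1 + rd)
    (μ₁ / μ₂ > rd → xNS < xR ∧ xR < xSI) ∧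
    (μ₁ / μ₂ < rd → xSI < xR ∧ xR < xNS) := by
  obtain ⟨hx0, hx1⟩ := hxR
  intro xNS xSI
  set s := Real.sqrt (μ₁ * rd / μ₂)
  have hs : 0 ≤ s := Real.sqrt_nonneg _
  have hs2 : s ^ 2 = μ₁ * rd / μ₂ := Real.sq_sqrt (by positivity)
  have hc : 0 < 1 - xR + s * xR := by nlinarith
  have hd : 0 < xR * (1 - xR) / μ₂ := by have := mul_pos hx0 (sub_pos.2 hx1); positivity
  have hfactor : (1 - xR + s * xR) * (1 - (1 + s) * xR) =
      (xR * (1 - xR) / μ₂) * ((1 + rd) * xR - 1) := by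
    rw [← hs2] at heq; linear_combination heq
  have hratio : μ₁ * rd / μ₂ = rd * (μ₁ / μ₂) := by ring
  constructor
  · intro hgt
    have hrs : rd < s := (Real.lt_sqrt hrd.le).2 (by rw [hratio, sq]; gcongr)
    exact one_div_lt_and_lt_one_div_of_mul_eq_mul hc hd hx0 (by linarith) hrs hfactor
  · intro hlt
    have hsr : s < rd := (Real.sqrt_lt' hrd).2 (by rw [hratio, sq]; gcongr)
    exact one_div_lt_and_lt_one_div_of_mul_eq_mul hd hc hx0 (by linarith) hsr
      (by linear_combination hfactor)
end

section
/- Let β > 0, μ₂ > 0 and rd > 0. Then the equation (1 − x)² = (β·rd/μ₂)·x² + (x(1 − x)/μ₂)·((1 + rd)x − 1 + β − μ₂·rd) has exactly one solution x₁* in the open interval (0, 1). -/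
/-!
Clearing the denominator `μ₂` turns the equation into a cubic `p` with positive leading coefficient
`1 + rd`, `p 0 = μ₂ > 0` and `p 1 = -β·rd < 0`, so the intermediate value theorem gives a root in
`(0, 1)`. If there were two, `p t = (1 + rd)(t - x)(t - y)(t - z)`; then `p 0 > 0` forces `z < 0`,
and then all three factors of `p 1` are positive.
-/

def cubicFun (c a b d t : ℝ) : ℝ := c * t ^ 3 + a * t ^ 2 + b * t + d

theorem continuous_cubicFun (c a b d : ℝ) : Continuous (cubicFun c a b d) := by
  unfold cubicFun
  fun_prop

theorem exists_cubicFun_eq_mul_sub_mul_sub_mul_sub {c a b d x y : ℝ} (hc : c ≠ 0)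
    (hx : cubicFun c a b d x = 0) (hy : cubicFun c a b d y = 0) (hxy : x ≠ y) :
    ∃ z, ∀ t, cubicFun c a b d t = c * (t - x) * (t - y) * (t - z) := by
  unfold cubicFun at hx hy
  have hyx : y - x ≠ 0 := sub_ne_zero.mpr hxy.symm
  have hsum : c * (x ^ 2 + x * y + y ^ 2) + a * (x + y) + b = 0 := by
    refine (mul_eq_zero.mp (?_ : (y - x) * _ = 0)).resolve_left hyx
    linear_combination hy - hx
  have hprod : c * x * y * (x + y) + a * x * y - d = 0 := by
    refine (mul_eq_zero.mp (?_ : (y - x) * _ = 0)).resolve_left hyx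
    linear_combination x * hy - y * hx
  refine ⟨-a / c - x - y, fun t => ?_⟩
  have hcz : c * (-a / c - x - y) = -a - c * (x + y) := by field_simp; ring
  unfold cubicFun
  linear_combination (t - x) * (t - y) * hcz + t * hsum - hprod

theorem existsUnique_cubicFun_eq_zero_mem_Ioo {c a b d : ℝ} (hc : 0 < c) (h0 : 0 < d)
    (h1 : c + a + b + d < 0) :
    ∃! x, x ∈ Set.Ioo (0 : ℝ) 1 ∧ cubicFun c a b d x = 0 := by
  have hp0 : cubicFun c a b d 0 = d := by simp [cubicFun]
  have hp1 : cubicFun c a b d 1 = c + a + b + d := by simp [cubicFun]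
  obtain ⟨x, hxI, hx⟩ : (0 : ℝ) ∈ cubicFun c a b d '' Set.Ioo 0 1 :=
    intermediate_value_Ioo' zero_le_one (continuous_cubicFun c a b d).continuousOn
      ⟨hp1.trans_lt h1, h0.trans_eq hp0.symm⟩
  refine ⟨x, ⟨hxI, hx⟩, fun y ⟨⟨hy0, hy1⟩, hy⟩ => by_contra fun hyx => ?_⟩
  obtain ⟨hx0, hx1⟩ := hxI
  obtain ⟨z, hz⟩ := exists_cubicFun_eq_mul_sub_mul_sub_mul_sub hc.ne' hy hx hyx
  have hz0 : z < 0 := by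
    have : c * y * x * z < 0 := by linear_combination h0 - (hz 0).symm.trans hp0
    exact neg_of_mul_neg_right this (by positivity)
  have : 0 < cubicFun c a b d 1 := by
    rw [hz 1]
    exact mul_pos (mul_pos (mul_pos hc (by linarith)) (by linarith)) (by linarith)
  linarith

theorem equation_iff_cubicFun_eq_zero {β μ₂ rd : ℝ} (hμ₂ : μ₂ ≠ 0) (x : ℝ) :
    (1 - x) ^ 2 =
        (β * rd / μ₂) * x ^ 2 + (x * (1 - x) / μ₂) * ((1 + rd) * x - 1 + β - μ₂ * rd) ↔
      cubicFun (1 + rd) ((μ₂ + β) * (1 - rd) - rd - 2) (μ₂ * (rd - 2) + 1 - β) μ₂ x = 0 := by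
  unfold cubicFun
  field_simp
  constructor <;> intro h <;> linear_combination h

/-- For β, μ₂, rd > 0, the equation
(1 − x)² = (β·rd/μ₂)x² + (x(1 − x)/μ₂)((1 + rd)x − 1 + β − μ₂·rd)
has exactly one solution in (0, 1). -/
theorem stmt13 (β μ₂ rd : ℝ) (hβ : 0 < β) (hμ₂ : 0 < μ₂) (hrd : 0 < rd) :
    ∃! x : ℝ, x ∈ Set.Ioo (0 : ℝ) 1 ∧
      (1 - x) ^ 2 =
        (β * rd / μ₂) * x ^ 2 +
          (x * (1 - x) / μ₂) * ((1 + rd) * x - 1 + β - μ₂ * rd) := by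
  simp only [equation_iff_cubicFun_eq_zero hμ₂.ne']
  refine existsUnique_cubicFun_eq_zero_mem_Ioo (by linarith) hμ₂ ?_
  linarith [mul_pos hβ hrd]
end

section
/- Let β > 0, μ₂ > 0 and rd > 0 with β < 1 + μ₂·rd, and let x₁* be the unique solution in (0, 1) of (1 − x)² = (β·rd/μ₂)·x² + (x(1 − x)/μ₂)·((1 + rd)x − 1 + β − μ₂·rd). Define a₁ = 1 + (rd(μ₂ + β) + 1 − β)/(1 + rd) and a₀ = (1 + μ₂·rd − β)/(1 + rd), and set x̂₁ = (a₁ − √(a₁² − 4a₀))/2. Then x̂₁ ∈ (0, 1) and x₁* > x̂₁. -/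
/-!
Clearing the denominator μ₂ turns the equilibrium equation into the identity
(1 + rd)·x·(x² − a₁x + a₀) = −μ₂(1 − x)², so the monic quadratic x² − a₁x + a₀ is negative at x₁*.
Hence x₁* lies strictly between the two roots of that quadratic, above the smaller root x̂₁,
and x̂₁ is positive because the product a₀ of the roots is.
-/

section QuadraticSmallerRoot

variable {b c x : ℝ}

theorem sub_sqrt_discrim_div_two_lt (h : x ^ 2 - b * x + c < 0) :
    (b - √(b ^ 2 - 4 * c)) / 2 < x := by
  have : b - 2 * x < √(b ^ 2 - 4 * c) := Real.lt_sqrt_of_sq_lt (by linarith)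
  linarith

theorem sub_sqrt_discrim_div_two_pos (hc : 0 < c) (hx : 0 < x) (h : x ^ 2 - b * x + c < 0) :
    0 < (b - √(b ^ 2 - 4 * c)) / 2 := by
  have hb : 0 < b := pos_of_mul_pos_right (by nlinarith : 0 < x * b) hx.le
  have : √(b ^ 2 - 4 * c) < b := (Real.sqrt_lt' hb).2 (by linarith)
  linarith

end QuadraticSmallerRoot

theorem equilibrium_quadratic_identity {β μ₂ rd x : ℝ} (hμ₂ : μ₂ ≠ 0) (hrd : 1 + rd ≠ 0)
    (heq : (1 - x) ^ 2 =
      (β * rd / μ₂) * x ^ 2 + (x * (1 - x) / μ₂) * ((1 + rd) * x - 1 + β - μ₂ * rd)) :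
    (1 + rd) * x * (x ^ 2 - (1 + (rd * (μ₂ + β) + 1 - β) / (1 + rd)) * x
      + (1 + μ₂ * rd - β) / (1 + rd)) = -(μ₂ * (1 - x) ^ 2) := by
  field_simp at heq ⊢
  linear_combination heq

theorem equilibrium_quadratic_neg {β μ₂ rd x : ℝ} (hμ₂ : 0 < μ₂) (hrd : 0 < rd)
    (hx : x ∈ Set.Ioo (0 : ℝ) 1)
    (heq : (1 - x) ^ 2 =
      (β * rd / μ₂) * x ^ 2 + (x * (1 - x) / μ₂) * ((1 + rd) * x - 1 + β - μ₂ * rd)) :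
    x ^ 2 - (1 + (rd * (μ₂ + β) + 1 - β) / (1 + rd)) * x
      + (1 + μ₂ * rd - β) / (1 + rd) < 0 := by
  have hfactor : 0 < (1 + rd) * x := mul_pos (by linarith) hx.1
  have hrhs : -(μ₂ * (1 - x) ^ 2) < 0 :=
    neg_neg_of_pos (mul_pos hμ₂ (pow_pos (sub_pos.2 hx.2) 2))
  rw [← equilibrium_quadratic_identity hμ₂.ne' (by linarith) heq] at hrhs
  exact neg_of_mul_neg_right hrhs hfactor.le

theorem stmt14_general (β μ₂ rd x : ℝ) (hμ₂ : 0 < μ₂) (hrd : 0 < rd)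
    (hsmall : β < 1 + μ₂ * rd)
    (hx : x ∈ Set.Ioo (0 : ℝ) 1)
    (heq : (1 - x) ^ 2 =
      (β * rd / μ₂) * x ^ 2 +
        (x * (1 - x) / μ₂) * ((1 + rd) * x - 1 + β - μ₂ * rd)) :
    let a₁ : ℝ := 1 + (rd * (μ₂ + β) + 1 - β) / (1 + rd)
    let a₀ : ℝ := (1 + μ₂ * rd - β) / (1 + rd)
    let xhat₁ : ℝ := (a₁ - Real.sqrt (a₁ ^ 2 - 4 * a₀)) / 2
    xhat₁ ∈ Set.Ioo (0 : ℝ) 1 ∧ xhat₁ < x := by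
  intro a₁ a₀ xhat₁
  have hQ : x ^ 2 - a₁ * x + a₀ < 0 := equilibrium_quadratic_neg hμ₂ hrd hx heq
  have ha₀ : 0 < a₀ := div_pos (by linarith) (by linarith)
  have hlt : xhat₁ < x := sub_sqrt_discrim_div_two_lt hQ
  exact ⟨⟨sub_sqrt_discrim_div_two_pos ha₀ hx.1 hQ, hlt.trans hx.2⟩, hlt⟩

/-- For β, μ₂, rd > 0 with β < 1 + μ₂·rd, and x₁* the unique root in (0, 1) of
(1 − x)² = (β·rd/μ₂)x² + (x(1 − x)/μ₂)((1 + rd)x − 1 + β − μ₂·rd): with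
a₁ = 1 + (rd(μ₂ + β) + 1 − β)/(1 + rd), a₀ = (1 + μ₂·rd − β)/(1 + rd) and
xhat₁ = (a₁ − √(a₁² − 4a₀))/2, one has xhat₁ ∈ (0, 1) and x₁* > xhat₁. -/
theorem stmt14 (β μ₂ rd x : ℝ) (hβ : 0 < β) (hμ₂ : 0 < μ₂) (hrd : 0 < rd)
    (hsmall : β < 1 + μ₂ * rd)
    (hx : x ∈ Set.Ioo (0 : ℝ) 1)
    (heq : (1 - x) ^ 2 =
      (β * rd / μ₂) * x ^ 2 +
        (x * (1 - x) / μ₂) * ((1 + rd) * x - 1 + β - μ₂ * rd)) :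
    let a₁ : ℝ := 1 + (rd * (μ₂ + β) + 1 - β) / (1 + rd)
    let a₀ : ℝ := (1 + μ₂ * rd - β) / (1 + rd)
    let xhat₁ : ℝ := (a₁ - Real.sqrt (a₁ ^ 2 - 4 * a₀)) / 2
    xhat₁ ∈ Set.Ioo (0 : ℝ) 1 ∧ xhat₁ < x :=
  stmt14_general β μ₂ rd x hμ₂ hrd hsmall hx heq
end

section
/- For β > 0, μ₂ > 0 and rd > 0, let x₁*(β, μ₂, rd) denote the unique solution in (0, 1) of (1 − x)² = (β·rd/μ₂)·x² + (x(1 − x)/μ₂)·((1 + rd)x − 1 + β − μ₂·rd). Then: (i) for fixed μ₂ and rd, x₁* is strictly decreasing in β, i.e. if β < β′ then x₁*(β′, μ₂, rd) < x₁*(β, μ₂, rd); (ii) if μ₂ < μ₂′ and β > 1 + rd·μ₂′, then x₁*(β, μ₂, rd) < x₁*(β, μ₂′, rd). -/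
/-!
Clearing denominators, a root `x` of the equation satisfies
`β · x A(x) = (1 - x) B_μ(x)` and `μ · (1 - x) A(x) = x (β A(x) - (1 - x)(1 - (1 + r) x))`,
where `A(x) = 1 - x + r x` and `B_μ(x) = μ A(x) + x - (1 + r) x²`. Subtracting these identities
for two roots and cross-multiplying factors the difference of the parameters as the difference of
the roots times an explicit polynomial in the two roots. That polynomial is positive: for
the `β`-comparison because `B_μ(x) > 0` at a root (as `β > 0`), for the `μ`-comparison
because `β > 1`.
-/

/-- The equilibrium equation A(x) for the inside-colony task allocation of the
two-task model with temporal polyethism and social interactions, with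
parameters β (maturation rate), μ₂ (outside mortality) and rd (relative
demand). -/
def ageTaskEq (β μ₂ rd x : ℝ) : Prop :=
  (1 - x) ^ 2 =
    (β * rd / μ₂) * x ^ 2 + (x * (1 - x) / μ₂) * ((1 + rd) * x - 1 + β - μ₂ * rd)

theorem ageTaskEq.beta_mul_eq {β μ r x : ℝ} (hμ : μ ≠ 0) (h : ageTaskEq β μ r x) :
    β * (x * (1 - x + r * x)) = (1 - x) * (μ * (1 - x + r * x) + x - (1 + r) * x ^ 2) := by
  unfold ageTaskEq at h
  field_simp at h
  linear_combination -h

theorem ageTaskEq.mu_mul_eq {β μ r x : ℝ} (hμ : μ ≠ 0) (h : ageTaskEq β μ r x) :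
    μ * ((1 - x) * (1 - x + r * x)) =
      x * (β * (1 - x + r * x) - (1 - x) * (1 - (1 + r) * x)) := by
  unfold ageTaskEq at h
  field_simp at h
  linear_combination h

lemma beta_divided_difference_pos {μ r x y : ℝ} (hμ : 0 ≤ μ) (hr : 0 ≤ r)
    (hx : x ∈ Set.Ioo (0 : ℝ) 1) (hy : y ∈ Set.Ioo (0 : ℝ) 1)
    (hB : 0 < μ * (1 - x + r * x) + x - (1 + r) * x ^ 2) :
    0 < μ * (1 - x + r * x) * (1 - y + r * y) +
      x * y * (1 + 2 * r - (1 + r) * (x + y) + (1 - r ^ 2) * (x * y)) := by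
  obtain ⟨hx0, hx1⟩ := hx
  obtain ⟨hy0, hy1⟩ := hy
  have hAx : 0 < 1 - x + r * x := by nlinarith
  have hAy : 0 < 1 - y + r * y := by nlinarith
  rcases le_or_gt ((1 + r) * x) 1 with hsx | hsx
  · have hf : 0 < 1 + 2 * r - (1 + r) * (x + y) + (1 - r ^ 2) * (x * y) := by
      have hdecomp : 1 + 2 * r - (1 + r) * (x + y) + (1 - r ^ 2) * (x * y) =
          r * (1 - (1 + r) * x) + (1 + r) * (1 - y) * (1 - x + r * x) := by ring
      rw [hdecomp]
      have : 0 ≤ r * (1 - (1 + r) * x) := mul_nonneg hr (by linarith)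
      have : 0 < (1 + r) * (1 - y) * (1 - x + r * x) := by
        have : 0 < 1 - y := by linarith
        positivity
      linarith
    have : 0 ≤ μ * (1 - x + r * x) * (1 - y + r * y) := by positivity
    have : 0 < x * y * (1 + 2 * r - (1 + r) * (x + y) + (1 - r ^ 2) * (x * y)) := by positivity
    linarith
  · have hdecomp : μ * (1 - x + r * x) * (1 - y + r * y) +
          x * y * (1 + 2 * r - (1 + r) * (x + y) + (1 - r ^ 2) * (x * y)) =
        (1 - y + r * y) * (μ * (1 - x + r * x) + x - (1 + r) * x ^ 2) +
          x * (1 - y) * ((1 + r) * x - 1 + (1 + r) * y * (1 - x + r * x)) := by ring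
    rw [hdecomp]
    have : 0 < 1 - y := by linarith
    have : 0 < (1 + r) * x - 1 := by linarith
    positivity

lemma mu_divided_difference_pos {β r x y : ℝ} (hβ : 1 < β) (hr : 0 ≤ r)
    (hx : x ∈ Set.Ioo (0 : ℝ) 1) (hy : y ∈ Set.Ioo (0 : ℝ) 1) :
    0 < β * (1 - x + r * x) * (1 - y + r * y) -
      (1 - x) * (1 - y) * ((1 - x) * (1 - y) - r * (x + y + r * (x * y))) := by
  obtain ⟨hx0, hx1⟩ := hx
  obtain ⟨hy0, hy1⟩ := hy
  have huv : 0 < (1 - x) * (1 - y) := mul_pos (by linarith) (by linarith)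
  have huv_lt : (1 - x) * (1 - y) < 1 := by nlinarith
  have huv_le : (1 - x) * (1 - y) ≤ (1 - x + r * x) * (1 - y + r * y) :=
    mul_le_mul (by nlinarith) (by nlinarith) (by linarith) (by nlinarith)
  refine sub_pos.mpr ?_
  calc (1 - x) * (1 - y) * ((1 - x) * (1 - y) - r * (x + y + r * (x * y)))
      ≤ (1 - x) * (1 - y) * ((1 - x) * (1 - y)) := by
        gcongr
        have : 0 ≤ r * (x + y + r * (x * y)) := by positivity
        linarith
    _ < (1 - x + r * x) * (1 - y + r * y) * 1 :=
        mul_lt_mul' huv_le huv_lt huv.le (huv.trans_le huv_le)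
    _ < β * (1 - x + r * x) * (1 - y + r * y) := by
        have : 0 < (1 - x + r * x) * (1 - y + r * y) := huv.trans_le huv_le
        nlinarith

theorem ageTaskEq_lt_of_beta_lt {β β' μ r x y : ℝ} (hμ : 0 < μ) (hr : 0 ≤ r) (hβ : 0 < β)
    (hββ' : β < β') (hx : x ∈ Set.Ioo (0 : ℝ) 1) (h : ageTaskEq β μ r x)
    (hy : y ∈ Set.Ioo (0 : ℝ) 1) (h' : ageTaskEq β' μ r y) : y < x := by
  obtain ⟨hx0, hx1⟩ := hx
  obtain ⟨hy0, hy1⟩ := hy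
  have hAx : 0 < 1 - x + r * x := by nlinarith
  have hAy : 0 < 1 - y + r * y := by nlinarith
  have hEx := h.beta_mul_eq hμ.ne'
  have hEy := h'.beta_mul_eq hμ.ne'
  have hB : 0 < μ * (1 - x + r * x) + x - (1 + r) * x ^ 2 :=
    have : 0 < (1 - x) * (μ * (1 - x + r * x) + x - (1 + r) * x ^ 2) := hEx ▸ by positivity
    pos_of_mul_pos_right this (by linarith)
  have hQ := beta_divided_difference_pos hμ.le hr ⟨hx0, hx1⟩ ⟨hy0, hy1⟩ hB
  have hkey : (β' - β) * (x * (1 - x + r * x) * (y * (1 - y + r * y))) =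
      (x - y) * (μ * (1 - x + r * x) * (1 - y + r * y) +
        x * y * (1 + 2 * r - (1 + r) * (x + y) + (1 - r ^ 2) * (x * y))) := by
    linear_combination (x * (1 - x + r * x)) * hEy - (y * (1 - y + r * y)) * hEx
  have hdβ : 0 < β' - β := sub_pos.mpr hββ'
  exact sub_pos.mp (pos_of_mul_pos_left (hkey ▸ by positivity) hQ.le)

theorem ageTaskEq_lt_of_mu_lt {β μ μ' r x y : ℝ} (hμ : 0 < μ) (hr : 0 ≤ r) (hβ : 1 < β)
    (hμμ' : μ < μ') (hx : x ∈ Set.Ioo (0 : ℝ) 1) (h : ageTaskEq β μ r x)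
    (hy : y ∈ Set.Ioo (0 : ℝ) 1) (h' : ageTaskEq β μ' r y) : x < y := by
  obtain ⟨hx0, hx1⟩ := hx
  obtain ⟨hy0, hy1⟩ := hy
  have hux : 0 < 1 - x := by linarith
  have huy : 0 < 1 - y := by linarith
  have hAx : 0 < 1 - x + r * x := by nlinarith
  have hAy : 0 < 1 - y + r * y := by nlinarith
  have hEx := h.mu_mul_eq hμ.ne'
  have hEy := h'.mu_mul_eq (hμ.trans hμμ').ne'
  have hQ := mu_divided_difference_pos hβ hr ⟨hx0, hx1⟩ ⟨hy0, hy1⟩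
  have hkey : (μ' - μ) * ((1 - x) * (1 - x + r * x) * ((1 - y) * (1 - y + r * y))) =
      (y - x) * (β * (1 - x + r * x) * (1 - y + r * y) -
        (1 - x) * (1 - y) * ((1 - x) * (1 - y) - r * (x + y + r * (x * y)))) := by
    linear_combination ((1 - x) * (1 - x + r * x)) * hEy - ((1 - y) * (1 - y + r * y)) * hEx
  have hdμ : 0 < μ' - μ := sub_pos.mpr hμμ'
  exact sub_pos.mp (pos_of_mul_pos_left (hkey ▸ by positivity) hQ.le)

/-- The unique root x₁* ∈ (0, 1) of the polyethism equilibrium equation is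
(i) strictly decreasing in β; (ii) if μ₂ < μ₂′ and β > 1 + rd·μ₂′, then
x₁*(β, μ₂, rd) < x₁*(β, μ₂′, rd). -/
theorem stmt15 (β μ₂ rd : ℝ) (hβ : 0 < β) (hμ₂ : 0 < μ₂) (hrd : 0 < rd) :
    (∀ β' x x' : ℝ, β < β' →
      x ∈ Set.Ioo (0 : ℝ) 1 → ageTaskEq β μ₂ rd x →
      x' ∈ Set.Ioo (0 : ℝ) 1 → ageTaskEq β' μ₂ rd x' → x' < x) ∧
    (∀ μ₂' x x' : ℝ, μ₂ < μ₂' → β > 1 + rd * μ₂' →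
      x ∈ Set.Ioo (0 : ℝ) 1 → ageTaskEq β μ₂ rd x →
      x' ∈ Set.Ioo (0 : ℝ) 1 → ageTaskEq β μ₂' rd x' → x < x') := by
  refine ⟨fun β' x x' hββ' hx h hx' h' ↦
    ageTaskEq_lt_of_beta_lt hμ₂ hrd.le hβ hββ' hx h hx' h', ?_⟩
  intro μ₂' x x' hμμ' hβ_gt hx h hx' h'
  have hβ_one : 1 < β := by nlinarith [mul_pos hrd (hμ₂.trans hμμ')]
  exact ageTaskEq_lt_of_mu_lt hμ₂ hrd.le hβ_one hμμ' hx h hx' h'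
end

section
/- Let β > 0, μ₂ > 0 and rd > 0. Then x₁ = μ₂/(β + μ₂) is the unique solution in the open interval (0, 1) of the equation (1 − x)² = (β·rd/μ₂)·x² + (x(1 − x)/μ₂)·(β − μ₂·rd). -/
/-!
Multiplying by μ₂, the equilibrium equation factors as
`((1 - x) + rd·x) · (μ₂(1 - x) - β·x) = 0`. On `(0, 1)` the first factor is positive,
so the solutions there are exactly the root `μ₂ / (β + μ₂)` of the second, linear factor.
-/

section Equilibrium

variable {β μ₂ rd x : ℝ}

lemma equilibrium_eq_iff_factor_eq_zero (hμ₂ : μ₂ ≠ 0) :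
    (1 - x) ^ 2 = (β * rd / μ₂) * x ^ 2 + (x * (1 - x) / μ₂) * (β - μ₂ * rd) ↔
      ((1 - x) + rd * x) * (μ₂ * (1 - x) - β * x) = 0 := by
  constructor <;> intro h
  · field_simp at h
    linear_combination h
  · field_simp
    linear_combination h

lemma linear_factor_eq_zero_iff (hsum : β + μ₂ ≠ 0) :
    μ₂ * (1 - x) - β * x = 0 ↔ x = μ₂ / (β + μ₂) := by
  rw [eq_div_iff hsum]
  constructor <;> intro h <;> linear_combination -h

lemma quadratic_factor_pos (hrd : 0 < rd) (hx : x ∈ Set.Ioo (0 : ℝ) 1) :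
    0 < (1 - x) + rd * x := by
  have := mul_pos hrd hx.1
  linarith [hx.2]

lemma div_add_mem_Ioo (hβ : 0 < β) (hμ₂ : 0 < μ₂) : μ₂ / (β + μ₂) ∈ Set.Ioo (0 : ℝ) 1 :=
  ⟨by positivity, (div_lt_one (by positivity)).2 (by linarith)⟩

end Equilibrium

/-- For β, μ₂, rd > 0, x₁ = μ₂/(β + μ₂) is the unique solution in (0, 1) of
(1 − x)² = (β·rd/μ₂)x² + (x(1 − x)/μ₂)(β − μ₂·rd). -/
theorem stmt17 (β μ₂ rd : ℝ) (hβ : 0 < β) (hμ₂ : 0 < μ₂) (hrd : 0 < rd) :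
    (μ₂ / (β + μ₂) ∈ Set.Ioo (0 : ℝ) 1 ∧
      (1 - μ₂ / (β + μ₂)) ^ 2 =
        (β * rd / μ₂) * (μ₂ / (β + μ₂)) ^ 2 +
          (μ₂ / (β + μ₂) * (1 - μ₂ / (β + μ₂)) / μ₂) * (β - μ₂ * rd)) ∧
    ∀ x : ℝ, x ∈ Set.Ioo (0 : ℝ) 1 →
      (1 - x) ^ 2 =
        (β * rd / μ₂) * x ^ 2 + (x * (1 - x) / μ₂) * (β - μ₂ * rd) →
      x = μ₂ / (β + μ₂) := by
  have hsum : β + μ₂ ≠ 0 := by positivity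
  refine ⟨⟨div_add_mem_Ioo hβ hμ₂, ?_⟩, fun x hx heq => ?_⟩
  · rw [equilibrium_eq_iff_factor_eq_zero hμ₂.ne', (linear_factor_eq_zero_iff hsum).2 rfl,
      mul_zero]
  · rw [equilibrium_eq_iff_factor_eq_zero hμ₂.ne'] at heq
    exact (linear_factor_eq_zero_iff hsum).1
      ((mul_eq_zero.1 heq).resolve_left (quadratic_factor_pos hrd hx).ne')
end

section
/- Let r > 0, b > 0, s > 1 and 0 < μ₁ ≤ μ_m with f(N_c(μ_m), μ_m) < 0, where f(N, μ) = μ(b + N^s) − r N^{s−1} and N_c(μ) = r(s−1)/(μs); denote by N₁^− < N₁^+ the two positive roots of f(·, μ₁) and by N_m^− < N_m^+ the two positive roots of f(·, μ_m). Suppose N : [0, ∞) → (0, ∞) is differentiable and satisfies the differential inequalities N(t)·(r N(t)^{s−1}/(b + N(t)^s) − μ_m) ≤ N′(t) ≤ N(t)·(r N(t)^{s−1}/(b + N(t)^s) − μ₁) for all t ≥ 0. Then: (i) if N(0) > N_m^−, then N_m^+ ≤ liminf_{t→∞} N(t) ≤ limsup_{t→∞} N(t) ≤ N₁^+; (ii)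 if N(0) < N₁^−, then liminf_{t→∞} N(t) = 0. -/
/-!
Along a solution, `N' = -N f(N, μ) / (b + N ^ s)` with `μ` between `μ₁` and `μ_m`, and `f(·, μ)`
decreases on `[0, N_c(μ)]` and increases beyond, so it is positive outside its two roots and
negative between them. Consequently a level above `N₁⁺` or below `N₁⁻` can only be crossed
downwards, and a level inside `(N_m⁻, N_m⁺)` only upwards. Once `N` is confined to a compact
subinterval of `(0, ∞)` by such a barrier, `|N'|` is bounded below on the far side of any further
level of the same kind, so `N` crosses it in finite time and never returns.
-/

open Filter Set Topology

section Fencing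

variable {g g' : ℝ → ℝ} {t₀ c ε : ℝ}

theorem forall_le_of_hasDerivAt_neg_of_eq (hg : ∀ t, t₀ ≤ t → HasDerivAt g (g' t) t)
    (h₀ : g t₀ ≤ c) (hc : ∀ t, t₀ ≤ t → g t = c → g' t < 0) : ∀ t, t₀ ≤ t → g t ≤ c :=
  fun _ ht => image_le_of_deriv_right_lt_deriv_boundary' (B := fun _ => c)
    (fun x hx => (hg x hx.1).continuousAt.continuousWithinAt)
    (fun x hx => (hg x hx.1).hasDerivWithinAt) h₀ continuousOn_const
    (fun _ _ => hasDerivWithinAt_const _ _ c) (fun x hx hx' => hc x hx.1 hx') ⟨ht, le_rfl⟩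

theorem forall_ge_of_hasDerivAt_pos_of_eq (hg : ∀ t, t₀ ≤ t → HasDerivAt g (g' t) t)
    (h₀ : c ≤ g t₀) (hc : ∀ t, t₀ ≤ t → g t = c → 0 < g' t) : ∀ t, t₀ ≤ t → c ≤ g t :=
  fun _ ht => image_le_of_deriv_right_lt_deriv_boundary' (f := fun _ => c) continuousOn_const
    (fun _ _ => hasDerivWithinAt_const _ _ c) h₀
    (fun x hx => (hg x hx.1).continuousAt.continuousWithinAt)
    (fun x hx => (hg x hx.1).hasDerivWithinAt) (fun x hx hx' => hc x hx.1 hx'.symm) ⟨ht, le_rfl⟩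

theorem eventually_le_of_hasDerivAt_le_neg (hg : ∀ t, t₀ ≤ t → HasDerivAt g (g' t) t)
    (hε : 0 < ε) (h : ∀ t, t₀ ≤ t → c ≤ g t → g' t ≤ -ε) : ∀ᶠ t in atTop, g t ≤ c := by
  obtain ⟨t₁, ht₁, hgt₁⟩ : ∃ t₁, t₀ ≤ t₁ ∧ g t₁ ≤ c := by
    by_contra! habove
    set T := t₀ + (g t₀ - c) / ε
    have hT : t₀ ≤ T :=
      le_add_of_nonneg_right (div_nonneg (sub_nonneg.2 (habove t₀ le_rfl).le) hε.le)
    have hline : ∀ x, HasDerivAt (fun t => g t₀ - ε * (t - t₀)) (-ε) x := fun x => by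
      simpa using ((hasDerivAt_id x).sub_const t₀).const_mul ε |>.const_sub (g t₀)
    have hdecay : g T ≤ g t₀ - ε * (T - t₀) :=
      image_le_of_deriv_right_le_deriv_boundary
        (fun x hx => (hg x hx.1).continuousAt.continuousWithinAt)
        (fun x hx => (hg x hx.1).hasDerivWithinAt) (by simp) (by fun_prop)
        (fun x _ => (hline x).hasDerivWithinAt) (fun x hx => h x hx.1 (habove x hx.1).le)
        ⟨hT, le_rfl⟩
    have : ε * (T - t₀) = g t₀ - c := by simp only [T]; field_simp; ring
    linarith [habove T hT]
  filter_upwards [eventually_ge_atTop t₁] with t ht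
  exact forall_le_of_hasDerivAt_neg_of_eq (fun t ht => hg t (ht₁.trans ht)) hgt₁
    (fun t ht hgt => (h t (ht₁.trans ht) hgt.ge).trans_lt (neg_neg_of_pos hε)) t ht

theorem eventually_ge_of_hasDerivAt_ge_pos (hg : ∀ t, t₀ ≤ t → HasDerivAt g (g' t) t)
    (hε : 0 < ε) (h : ∀ t, t₀ ≤ t → g t ≤ c → ε ≤ g' t) : ∀ᶠ t in atTop, c ≤ g t := by
  have := eventually_le_of_hasDerivAt_le_neg (g := -g) (g' := -g') (c := -c)
    (fun t ht => (hg t ht).neg) hε (fun t ht hgt => neg_le_neg (h t ht (neg_le_neg_iff.1 hgt)))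
  filter_upwards [this] with t ht
  exact neg_le_neg_iff.1 ht

end Fencing

noncomputable section

/-- The paper's `f(x, μ)`: the per-capita growth rate is `-netMortality r b s μ x / (b + x ^ s)`. -/
def netMortality (r b s μ x : ℝ) : ℝ := μ * (b + x ^ s) - r * x ^ (s - 1)

/-- The paper's `N_c(μ)`, where `netMortality r b s μ` attains its minimum on `[0, ∞)`. -/
def criticalSize (r s μ : ℝ) : ℝ := r * (s - 1) / (μ * s)

def colonyGrowth (r b s μ x : ℝ) : ℝ := x * (r * x ^ (s - 1) / (b + x ^ s) - μ)

end

section Model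

variable {r b s μ x : ℝ}

theorem continuous_netMortality (hs : 1 ≤ s) : Continuous (netMortality r b s μ) := by
  unfold netMortality
  have h1 := Real.continuous_rpow_const (q := s) (by linarith)
  have h2 := Real.continuous_rpow_const (q := s - 1) (by linarith)
  fun_prop

theorem hasDerivAt_netMortality (hx : 0 < x) :
    HasDerivAt (netMortality r b s μ) (x ^ (s - 2) * (μ * s * x - r * (s - 1))) x := by
  have h : HasDerivAt (netMortality r b s μ)
      (μ * (s * x ^ (s - 1)) - r * ((s - 1) * x ^ (s - 1 - 1))) x :=
    (((Real.hasDerivAt_rpow_const (Or.inl hx.ne')).const_add b).const_mul μ).sub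
      ((Real.hasDerivAt_rpow_const (Or.inl hx.ne')).const_mul r)
  convert h using 1
  have h1 : x ^ (s - 1) = x ^ (s - 2) * x := by
    rw [← Real.rpow_add_one hx.ne']; ring_nf
  rw [h1, show s - 1 - 1 = s - 2 by ring]
  ring

theorem criticalSize_nonneg (hr : 0 ≤ r) (hs : 1 ≤ s) (hμ : 0 < μ) : 0 ≤ criticalSize r s μ :=
  div_nonneg (mul_nonneg hr (by linarith)) (mul_nonneg hμ.le (by linarith))

theorem strictAntiOn_netMortality (hs : 1 ≤ s) (hμ : 0 < μ) :
    StrictAntiOn (netMortality r b s μ) (Icc 0 (criticalSize r s μ)) := by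
  refine strictAntiOn_of_deriv_neg (convex_Icc _ _) (continuous_netMortality hs).continuousOn
    fun x hx => ?_
  rw [interior_Icc] at hx
  rw [(hasDerivAt_netMortality hx.1).deriv]
  have hlt : μ * s * x < r * (s - 1) := by
    have : x < r * (s - 1) / (μ * s) := hx.2
    rw [lt_div_iff₀ (by positivity)] at this; linarith
  exact mul_neg_of_pos_of_neg (Real.rpow_pos_of_pos hx.1 _) (by linarith)

theorem strictMonoOn_netMortality (hr : 0 ≤ r) (hs : 1 ≤ s) (hμ : 0 < μ) :
    StrictMonoOn (netMortality r b s μ) (Ici (criticalSize r s μ)) := by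
  refine strictMonoOn_of_deriv_pos (convex_Ici _) (continuous_netMortality hs).continuousOn
    fun x hx => ?_
  rw [interior_Ici] at hx
  have hx0 : 0 < x := (criticalSize_nonneg hr hs hμ).trans_lt hx
  rw [(hasDerivAt_netMortality hx0).deriv]
  have hlt : r * (s - 1) < μ * s * x := by
    have : r * (s - 1) / (μ * s) < x := hx
    rw [div_lt_iff₀ (by positivity)] at this; linarith
  exact mul_pos (Real.rpow_pos_of_pos hx0 _) (by linarith)

theorem netMortality_pos_of_lt_root {xm : ℝ} (hs : 1 ≤ s) (hμ : 0 < μ)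
    (hroot : netMortality r b s μ xm = 0) (hxm : xm ≤ criticalSize r s μ) (hx : 0 ≤ x)
    (hxxm : x < xm) : 0 < netMortality r b s μ x :=
  hroot ▸ strictAntiOn_netMortality hs hμ ⟨hx, (hxxm.trans_le hxm).le⟩ ⟨hx.trans hxxm.le, hxm⟩ hxxm

theorem netMortality_pos_of_root_lt {xp : ℝ} (hr : 0 ≤ r) (hs : 1 ≤ s) (hμ : 0 < μ)
    (hroot : netMortality r b s μ xp = 0) (hxp : criticalSize r s μ ≤ xp) (hxxp : xp < x) :
    0 < netMortality r b s μ x :=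
  hroot ▸ strictMonoOn_netMortality hr hs hμ hxp (hxp.trans hxxp.le) hxxp

theorem netMortality_neg_of_mem_Ioo {xm xp : ℝ} (hr : 0 ≤ r) (hs : 1 ≤ s) (hμ : 0 < μ)
    (hxm : 0 ≤ xm) (hrootm : netMortality r b s μ xm = 0) (hxmc : xm ≤ criticalSize r s μ)
    (hrootp : netMortality r b s μ xp = 0) (hxpc : criticalSize r s μ ≤ xp)
    (hx : x ∈ Ioo xm xp) : netMortality r b s μ x < 0 := by
  rcases le_total x (criticalSize r s μ) with hxc | hxc
  · exact hrootm ▸ strictAntiOn_netMortality hs hμ ⟨hxm, hxmc⟩ ⟨hxm.trans hx.1.le, hxc⟩ hx.1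
  · exact hrootp ▸ strictMonoOn_netMortality hr hs hμ hxc hxpc hx.2

theorem netMortality_le_max_of_mem_Icc {a c : ℝ} (hr : 0 ≤ r) (hs : 1 ≤ s) (hμ : 0 < μ)
    (ha : 0 ≤ a) (hx : x ∈ Icc a c) :
    netMortality r b s μ x ≤ max (netMortality r b s μ a) (netMortality r b s μ c) := by
  rcases le_total x (criticalSize r s μ) with hxc | hxc
  · exact le_max_of_le_left <| (strictAntiOn_netMortality hs hμ).antitoneOn
      ⟨ha, hx.1.trans hxc⟩ ⟨ha.trans hx.1, hxc⟩ hx.1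
  · exact le_max_of_le_right <| (strictMonoOn_netMortality hr hs hμ).monotoneOn
      hxc (hxc.trans hx.2) hx.2

theorem colonyGrowth_eq (hb : 0 ≤ b) (hx : 0 < x) :
    colonyGrowth r b s μ x = -(x * netMortality r b s μ x) / (b + x ^ s) := by
  have : 0 < b + x ^ s := by positivity
  unfold colonyGrowth netMortality
  field_simp
  ring

theorem colonyGrowth_neg (hb : 0 ≤ b) (hx : 0 < x) (hF : 0 < netMortality r b s μ x) :
    colonyGrowth r b s μ x < 0 := by
  rw [colonyGrowth_eq hb hx]
  exact div_neg_of_neg_of_pos (neg_neg_of_pos (mul_pos hx hF)) (by positivity)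

theorem colonyGrowth_pos (hb : 0 ≤ b) (hx : 0 < x) (hF : netMortality r b s μ x < 0) :
    0 < colonyGrowth r b s μ x := by
  rw [colonyGrowth_eq hb hx]
  exact div_pos (neg_pos_of_neg (mul_neg_of_pos_of_neg hx hF)) (by positivity)

theorem mul_div_le_mul_div_of_mem_Icc {a M m y : ℝ} (hb : 0 ≤ b) (hs : 0 ≤ s) (ha : 0 < a)
    (hx : x ∈ Icc a M) (hm : 0 ≤ m) (hmy : m ≤ y) : a * m / (b + M ^ s) ≤ x * y / (b + x ^ s) :=
  have hx0 : 0 < x := ha.trans_le hx.1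
  div_le_div₀ (mul_nonneg hx0.le (hm.trans hmy)) (mul_le_mul hx.1 hmy hm hx0.le) (by positivity)
    (add_le_add_right (Real.rpow_le_rpow hx0.le hx.2 hs) b)

theorem colonyGrowth_le_of_mem_Icc {a M m : ℝ} (hb : 0 ≤ b) (hs : 0 ≤ s) (ha : 0 < a)
    (hx : x ∈ Icc a M) (hm : 0 ≤ m) (hF : m ≤ netMortality r b s μ x) :
    colonyGrowth r b s μ x ≤ -(a * m / (b + M ^ s)) := by
  rw [colonyGrowth_eq hb (ha.trans_le hx.1), neg_div]
  exact neg_le_neg (mul_div_le_mul_div_of_mem_Icc hb hs ha hx hm hF)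

theorem le_colonyGrowth_of_mem_Icc {a M m : ℝ} (hb : 0 ≤ b) (hs : 0 ≤ s) (ha : 0 < a)
    (hx : x ∈ Icc a M) (hm : 0 ≤ m) (hF : netMortality r b s μ x ≤ -m) :
    a * m / (b + M ^ s) ≤ colonyGrowth r b s μ x := by
  rw [colonyGrowth_eq hb (ha.trans_le hx.1), neg_mul_eq_mul_neg]
  exact mul_div_le_mul_div_of_mem_Icc hb hs ha hx hm (le_neg.1 hF)

end Model

section Trapping

variable {r b s μ : ℝ} {N N' : ℝ → ℝ}

theorem eventually_le_of_deriv_le_colonyGrowth {xp d : ℝ} (hr : 0 ≤ r) (hb : 0 ≤ b)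
    (hs : 1 ≤ s) (hμ : 0 < μ) (hroot : netMortality r b s μ xp = 0)
    (hxp : criticalSize r s μ ≤ xp) (hderiv : ∀ t, 0 ≤ t → HasDerivAt N (N' t) t)
    (hhigh : ∀ t, 0 ≤ t → N' t ≤ colonyGrowth r b s μ (N t)) (hd : xp < d) :
    ∀ᶠ t in atTop, N t ≤ d := by
  have hd0 : 0 < d := (criticalSize_nonneg hr hs hμ).trans_lt (hxp.trans_lt hd)
  have hFd := netMortality_pos_of_root_lt hr hs hμ hroot hxp hd
  have hmono : MonotoneOn (netMortality r b s μ) (Ici d) :=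
    (strictMonoOn_netMortality hr hs hμ).monotoneOn.mono (Ici_subset_Ici.2 (hxp.trans hd.le))
  -- the barrier `N ≤ M` bounds the denominator `b + N ^ s`, keeping the decay rate away from `0`
  set M := max (N 0) d
  have hdM : d ≤ M := le_max_right _ _
  have hbounded : ∀ t, 0 ≤ t → N t ≤ M :=
    forall_le_of_hasDerivAt_neg_of_eq hderiv (le_max_left _ _) fun t ht hNt =>
      (hhigh t ht).trans_lt <| colonyGrowth_neg hb (hNt ▸ hd0.trans_le hdM)
        (hNt ▸ hFd.trans_le (hmono self_mem_Ici hdM hdM))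
  refine eventually_le_of_hasDerivAt_le_neg hderiv (by positivity) fun t ht hdN =>
    (hhigh t ht).trans <| colonyGrowth_le_of_mem_Icc hb (by linarith) hd0 ⟨hdN, hbounded t ht⟩
      hFd.le (hmono self_mem_Ici hdN hdN)

theorem eventually_ge_of_colonyGrowth_le_deriv {xm xp c : ℝ} (hr : 0 ≤ r) (hb : 0 ≤ b)
    (hs : 1 ≤ s) (hμ : 0 < μ) (hxm : 0 ≤ xm) (hrootm : netMortality r b s μ xm = 0)
    (hxmc : xm < criticalSize r s μ) (hrootp : netMortality r b s μ xp = 0)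
    (hxpc : criticalSize r s μ ≤ xp) (hderiv : ∀ t, 0 ≤ t → HasDerivAt N (N' t) t)
    (hlow : ∀ t, 0 ≤ t → colonyGrowth r b s μ (N t) ≤ N' t) (h0 : xm < N 0) (hc : c < xp) :
    ∀ᶠ t in atTop, c ≤ N t := by
  have hF : ∀ x ∈ Ioo xm xp, netMortality r b s μ x < 0 := fun x =>
    netMortality_neg_of_mem_Ioo hr hs hμ hxm hrootm hxmc.le hrootp hxpc
  obtain ⟨a, hxma, ha⟩ := exists_between (lt_min h0 (hxmc.trans_le hxpc))
  have ha0 : 0 < a := hxm.trans_lt hxma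
  have hap : a < xp := ha.trans_le (min_le_right _ _)
  have hbounded : ∀ t, 0 ≤ t → a ≤ N t :=
    forall_ge_of_hasDerivAt_pos_of_eq hderiv (ha.le.trans (min_le_left _ _)) fun t ht hNt =>
      (colonyGrowth_pos hb (hNt ▸ ha0) (hNt ▸ hF a ⟨hxma, hap⟩)).trans_le (hlow t ht)
  set c' := max a c
  set m := -max (netMortality r b s μ a) (netMortality r b s μ c')
  have hm : 0 < m := neg_pos.2 <| max_lt (hF a ⟨hxma, hap⟩)
    (hF c' ⟨hxma.trans_le (le_max_left _ _), max_lt hap hc⟩)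
  have hrate : ∀ t, 0 ≤ t → N t ≤ c' → a * m / (b + c' ^ s) ≤ N' t := fun t ht hNc' =>
    have hNt : N t ∈ Icc a c' := ⟨hbounded t ht, hNc'⟩
    (le_colonyGrowth_of_mem_Icc hb (by linarith) ha0 hNt hm.le <|
      (netMortality_le_max_of_mem_Icc hr hs hμ ha0.le hNt).trans (neg_neg _).ge).trans (hlow t ht)
  filter_upwards [eventually_ge_of_hasDerivAt_ge_pos hderiv (by positivity) hrate] with t ht
  exact (le_max_right a c).trans ht

theorem tendsto_zero_of_deriv_le_colonyGrowth {xm : ℝ} (hb : 0 ≤ b) (hs : 1 ≤ s) (hμ : 0 < μ)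
    (hroot : netMortality r b s μ xm = 0) (hxm : xm ≤ criticalSize r s μ)
    (hNpos : ∀ t, 0 ≤ t → 0 < N t) (hderiv : ∀ t, 0 ≤ t → HasDerivAt N (N' t) t)
    (hhigh : ∀ t, 0 ≤ t → N' t ≤ colonyGrowth r b s μ (N t)) (h0 : N 0 < xm) :
    Tendsto N atTop (𝓝 0) := by
  obtain ⟨d, hNd, hdxm⟩ := exists_between h0
  have hd0 : 0 < d := (hNpos 0 le_rfl).trans hNd
  have hFd := netMortality_pos_of_lt_root hs hμ hroot hxm hd0.le hdxm
  have hdc : d ≤ criticalSize r s μ := hdxm.le.trans hxm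
  have hbounded : ∀ t, 0 ≤ t → N t ≤ d :=
    forall_le_of_hasDerivAt_neg_of_eq hderiv hNd.le fun t ht hNt =>
      (hhigh t ht).trans_lt <| colonyGrowth_neg hb (hNt ▸ hd0) (hNt ▸ hFd)
  refine tendsto_order.2 ⟨fun c hc => eventually_atTop.2 ⟨0, fun t ht => hc.trans (hNpos t ht)⟩,
    fun c hc => ?_⟩
  set e := min (c / 2) d
  have he : 0 < e := lt_min (half_pos hc) hd0
  have hrate : ∀ t, 0 ≤ t → e ≤ N t →
      N' t ≤ -(e * netMortality r b s μ d / (b + d ^ s)) := fun t ht heN =>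
    have hFN : netMortality r b s μ d ≤ netMortality r b s μ (N t) :=
      (strictAntiOn_netMortality hs hμ).antitoneOn ⟨he.le.trans heN, (hbounded t ht).trans hdc⟩
        ⟨hd0.le, hdc⟩ (hbounded t ht)
    (hhigh t ht).trans <|
      colonyGrowth_le_of_mem_Icc hb (by linarith) he ⟨heN, hbounded t ht⟩ hFd.le hFN
  filter_upwards [eventually_le_of_hasDerivAt_le_neg hderiv (by positivity) hrate] with t ht
  linarith [min_le_left (c / 2) d]

end Trapping

theorem stmt19_general (r b s μ₁ μm : ℝ) (hr : 0 < r) (hb : 0 < b) (hs : 1 < s)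
    (hμ₁ : 0 < μ₁) (h1m : μ₁ ≤ μm)
    (N1m N1p Nmm Nmp : ℝ)
    (hN1m : μ₁ * (b + N1m ^ s) - r * N1m ^ (s - 1) = 0)
    (hN1m_lt : N1m < r * (s - 1) / (μ₁ * s))
    (hN1p : μ₁ * (b + N1p ^ s) - r * N1p ^ (s - 1) = 0)
    (hN1p_gt : r * (s - 1) / (μ₁ * s) < N1p)
    (hNmm_pos : 0 < Nmm)
    (hNmm : μm * (b + Nmm ^ s) - r * Nmm ^ (s - 1) = 0)
    (hNmm_lt : Nmm < r * (s - 1) / (μm * s))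
    (hNmp : μm * (b + Nmp ^ s) - r * Nmp ^ (s - 1) = 0)
    (hNmp_gt : r * (s - 1) / (μm * s) < Nmp)
    (N N' : ℝ → ℝ)
    (hNpos : ∀ t : ℝ, 0 ≤ t → 0 < N t)
    (hderiv : ∀ t : ℝ, 0 ≤ t → HasDerivAt N (N' t) t)
    (hlow : ∀ t : ℝ, 0 ≤ t →
      N t * (r * N t ^ (s - 1) / (b + N t ^ s) - μm) ≤ N' t)
    (hhigh : ∀ t : ℝ, 0 ≤ t →
      N' t ≤ N t * (r * N t ^ (s - 1) / (b + N t ^ s) - μ₁)) :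
    (Nmm < N 0 →
      Nmp ≤ liminf N atTop ∧ limsup N atTop ≤ N1p) ∧
    (N 0 < N1m → liminf N atTop = 0) := by
  refine ⟨fun h0 => ?_, fun h0 => (tendsto_zero_of_deriv_le_colonyGrowth hb.le hs.le hμ₁ hN1m
    hN1m_lt.le hNpos hderiv hhigh h0).liminf_eq⟩
  have hupper : ∀ d, N1p < d → ∀ᶠ t in atTop, N t ≤ d := fun d =>
    eventually_le_of_deriv_le_colonyGrowth hr.le hb.le hs.le hμ₁ hN1p hN1p_gt.le hderiv hhigh
  have hlower : ∀ c, c < Nmp → ∀ᶠ t in atTop, c ≤ N t := fun c =>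
    eventually_ge_of_colonyGrowth_le_deriv hr.le hb.le hs.le (hμ₁.trans_le h1m) hNmm_pos.le hNmm
      hNmm_lt hNmp hNmp_gt.le hderiv hlow h0
  have hcobdd_ge : IsCoboundedUnder (· ≥ ·) atTop N :=
    isCoboundedUnder_ge_of_eventually_le atTop (hupper _ (lt_add_one N1p))
  have hcobdd_le : IsCoboundedUnder (· ≤ ·) atTop N :=
    isCoboundedUnder_le_of_eventually_le atTop (hlower _ (sub_one_lt Nmp))
  exact ⟨le_of_forall_lt_imp_le_of_dense fun c hc => le_liminf_of_le hcobdd_ge (hlower c hc),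
    le_of_forall_gt_imp_ge_of_dense fun d hd => limsup_le_of_le hcobdd_le (hupper d hd)⟩

/-- For r, b > 0, s > 1, 0 < μ₁ ≤ μ_m with f(N_c(μ_m), μ_m) < 0, where
f(N, μ) = μ(b + N^s) − rN^{s−1} and N_c(μ) = r(s−1)/(μs), and with
N₁⁻ < N_c(μ₁) < N₁⁺ the positive roots of f(·, μ₁) and
N_m⁻ < N_c(μ_m) < N_m⁺ those of f(·, μ_m): if N : [0, ∞) → (0, ∞) is
differentiable and satisfies
N(rN^{s−1}/(b + N^s) − μ_m) ≤ N′ ≤ N(rN^{s−1}/(b + N^s) − μ₁), then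
(i) N(0) > N_m⁻ implies N_m⁺ ≤ liminf N ≤ limsup N ≤ N₁⁺, and
(ii) N(0) < N₁⁻ implies liminf N = 0. -/
theorem stmt19 (r b s μ₁ μm : ℝ) (hr : 0 < r) (hb : 0 < b) (hs : 1 < s)
    (hμ₁ : 0 < μ₁) (h1m : μ₁ ≤ μm)
    (hneg : μm * (b + (r * (s - 1) / (μm * s)) ^ s) -
      r * (r * (s - 1) / (μm * s)) ^ (s - 1) < 0)
    (N1m N1p Nmm Nmp : ℝ)
    (hN1m_pos : 0 < N1m)
    (hN1m : μ₁ * (b + N1m ^ s) - r * N1m ^ (s - 1) = 0)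
    (hN1m_lt : N1m < r * (s - 1) / (μ₁ * s))
    (hN1p : μ₁ * (b + N1p ^ s) - r * N1p ^ (s - 1) = 0)
    (hN1p_gt : r * (s - 1) / (μ₁ * s) < N1p)
    (hNmm_pos : 0 < Nmm)
    (hNmm : μm * (b + Nmm ^ s) - r * Nmm ^ (s - 1) = 0)
    (hNmm_lt : Nmm < r * (s - 1) / (μm * s))
    (hNmp : μm * (b + Nmp ^ s) - r * Nmp ^ (s - 1) = 0)
    (hNmp_gt : r * (s - 1) / (μm * s) < Nmp)
    (N N' : ℝ → ℝ)
    (hNpos : ∀ t : ℝ, 0 ≤ t → 0 < N t)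
    (hderiv : ∀ t : ℝ, 0 ≤ t → HasDerivAt N (N' t) t)
    (hlow : ∀ t : ℝ, 0 ≤ t →
      N t * (r * N t ^ (s - 1) / (b + N t ^ s) - μm) ≤ N' t)
    (hhigh : ∀ t : ℝ, 0 ≤ t →
      N' t ≤ N t * (r * N t ^ (s - 1) / (b + N t ^ s) - μ₁)) :
    (Nmm < N 0 →
      Nmp ≤ liminf N atTop ∧ limsup N atTop ≤ N1p) ∧
    (N 0 < N1m → liminf N atTop = 0) :=
  stmt19_general r b s μ₁ μm hr hb hs hμ₁ h1m N1m N1p Nmm Nmp hN1m hN1m_lt hN1p hN1p_gt hNmm_pos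
    hNmm hNmm_lt hNmp hNmp_gt N N' hNpos hderiv hlow hhigh
end
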